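/- arXiv:2209.12436 — 2 statements merged into one kernel-verified Lean document; each statement's English description precedes it below -/
import Mathlib

section
/- For all r ≥ 2, k ≥ 1, and i, j ≥ 0, the number of permutations π ∈ S_{rk+1} whose inverse is a 2134⋯(r+1)-cluster with des(π) = i and lpk(π) = j equals the number of r-Stirling permutations of order k with exactly i leading plateaus and j left ascent-plateaus. -/
open scoped Classical

noncomputable section

/-- One-line notation (0-based positions and values) of a permutation of `Fin n`. -/
def ofPerm {n : ℕ} (π : Equiv.Perm (Fin n)) : ℕ → ℕ :=
  fun i => if h : i < n then (π ⟨i, h⟩ : ℕ) else 0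

/-- Number of descents of a word of length `n`. -/
def desNum (n : ℕ) (w : ℕ → ℕ) : ℕ :=
  ((Finset.range (n - 1)).filter (fun i => w (i + 1) < w i)).card

/-- Number of peaks of a word of length `n`. -/
def pkNum (n : ℕ) (w : ℕ → ℕ) : ℕ :=
  ((Finset.Ico 1 (n - 1)).filter (fun i => w (i - 1) < w i ∧ w (i + 1) < w i)).card

/-- Number of left peaks of a word of length `n`. -/
def lpkNum (n : ℕ) (w : ℕ → ℕ) : ℕ :=
  ((Finset.range (n - 1)).filter
    (fun i => (1 ≤ i ∧ w (i - 1) < w i ∧ w (i + 1) < w i) ∨ (i = 0 ∧ w 1 < w 0))).card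

/-- A word of length `r*k+1` is a `2134⋯(r+1)`-cluster: in each window of length `r+1`
starting at position `r*j` (`0 ≤ j ≤ k-1`), the second entry is smallest, the first entry
is second smallest, and the remaining entries increase. -/
def IsCluster (r k : ℕ) (w : ℕ → ℕ) : Prop :=
  ∀ j < k, w (r * j + 1) < w (r * j) ∧ w (r * j) < w (r * j + 2) ∧
    ∀ l, 2 ≤ l → l < r → w (r * j + l) < w (r * j + l + 1)

/-- Permutations of `S_{rk+1}` whose inverse is a `2134⋯(r+1)`-cluster. -/
def clusterSet (r k : ℕ) : Finset (Equiv.Perm (Fin (r * k + 1))) :=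
  Finset.univ.filter (fun π => IsCluster r k (ofPerm π⁻¹))



/-- 1-based word (positions 0,…,n-1, letters 1,…,k) of a function `Fin n → Fin k`. -/
def ofWord {n k : ℕ} (ρ : Fin n → Fin k) : ℕ → ℕ :=
  fun i => if h : i < n then (ρ ⟨i, h⟩ : ℕ) + 1 else 0

/-- `r`-Stirling permutations of order `k`: words over `{1^r,…,k^r}` such that between
any two equal letters all letters are at least as large. -/
def stirlingSet (r k : ℕ) : Finset (Fin (r * k) → Fin k) :=
  Finset.univ.filter (fun ρ =>
    (∀ a : Fin k, (Finset.univ.filter (fun i => ρ i = a)).card = r) ∧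
    (∀ i l j : Fin (r * k), i < l → l < j → ρ i = ρ j → ρ i ≤ ρ l))

/-- Number of leading plateaus of a word of length `n`. -/
def lplatNum (n : ℕ) (w : ℕ → ℕ) : ℕ :=
  ((Finset.range (n - 1)).filter (fun i => w i = w (i + 1) ∧ ∀ j < i, w j ≠ w i)).card

/-- Number of ascent-plateaus of a word of length `n`. -/
def ascplatNum (n : ℕ) (w : ℕ → ℕ) : ℕ :=
  ((Finset.Ico 1 (n - 1)).filter (fun i => w (i - 1) < w i ∧ w i = w (i + 1))).card

/-- Number of left ascent-plateaus of a word of length `n`. -/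
def lascplatNum (n : ℕ) (w : ℕ → ℕ) : ℕ :=
  ((Finset.range (n - 1)).filter
    (fun i => (1 ≤ i ∧ w (i - 1) < w i ∧ w i = w (i + 1)) ∨ (i = 0 ∧ w 0 = w 1))).card
/-- `p̃_{r,k}(i,j)`: number of `π ∈ S_{rk+1}` with `π⁻¹` a `2134⋯(r+1)`-cluster,
`des π = i` and `lpk π = j`. -/
def ptnum (r k i j : ℕ) : ℕ :=
  ((clusterSet r k).filter (fun π =>
    desNum (r * k + 1) (ofPerm π) = i ∧ lpkNum (r * k + 1) (ofPerm π) = j)).card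

/-- `q̃_{r,k}(i,j)`: number of `r`-Stirling permutations of order `k` with
`i` leading plateaus and `j` left ascent-plateaus. -/
def qtnum (r k i j : ℕ) : ℕ :=
  ((stirlingSet r k).filter (fun ρ =>
    lplatNum (r * k) (ofWord ρ) = i ∧ lascplatNum (r * k) (ofWord ρ) = j)).card

/-! ### Auxiliary material for `stmt7` -/

namespace Stmt7Aux

open Finset

/-- Shift map: identity below `v`, adds `d` at or above `v`. -/
def shiftIns (v d : ℕ) : ℕ → ℕ := fun x => if x < v then x else x + d

lemma shiftIns_injective (v d : ℕ) : Function.Injective (shiftIns v d) := by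
  intro x y h
  unfold shiftIns at h
  split_ifs at h <;> omega

lemma shiftIns_ne (v d : ℕ) (hd : 1 ≤ d) (y : ℕ) : shiftIns v d y ≠ v := by
  unfold shiftIns; split_ifs <;> omega

lemma card_insert_image_shift (v d : ℕ) (hd : 1 ≤ d) (s : Finset ℕ) :
    (insert v (s.image (shiftIns v d))).card = s.card + 1 := by
  have hnot : v ∉ s.image (shiftIns v d) := by
    simp only [Finset.mem_image]
    rintro ⟨y, -, hy⟩
    exact shiftIns_ne v d hd y hy
  rw [Finset.card_insert_of_notMem hnot,
    Finset.card_image_of_injective _ (shiftIns_injective v d)]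

/-- The transition coefficient. -/
def cfun (n a b i j : ℕ) : ℕ :=
  if i = a ∧ j = b then b
  else if i = a ∧ j = b + 1 then a - b
  else if i = a + 1 ∧ j = b then b
  else if i = a + 1 ∧ j = b + 1 then n - a - b
  else 0

/-- Abstract counting lemma: classification of insertion positions. -/
lemma abstract_count (n : ℕ) (X Y : Finset ℕ) (hXY : X ⊆ Y)
    (hY : ∀ x ∈ Y, x + 1 < n)
    (hX1 : ∀ x ∈ X, x + 1 ∉ X)
    (hX2 : ∀ x ∈ X, ∀ y ∈ Y, y + 1 ≠ x) (i j : ℕ) :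
    ((Finset.range n).filter (fun v =>
        (Y.filter (fun x => x + 1 ≠ v)).card + 1 = i ∧
        (X.filter (fun x => x ≠ v ∧ x + 1 ≠ v)).card + 1 = j)).card
      = cfun n Y.card X.card i j := by
  classical
  have hXn : ∀ x ∈ X, x + 1 < n := fun x hx => hY x (hXY hx)
  have hsucc_inj : Function.Injective (fun x : ℕ => x + 1) := fun x y h => Nat.succ_injective h
  set a := Y.card with ha
  set b := X.card with hb
  have hYcard : ∀ v : ℕ, (Y.filter (fun x => x + 1 ≠ v)).card + 1
      = if v ∈ Y.image (fun x => x + 1) then a else a + 1 := by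
    intro v
    by_cases h : v ∈ Y.image (fun x => x + 1)
    · rw [if_pos h]
      obtain ⟨y0, hy0, hy0v⟩ := Finset.mem_image.mp h
      have hset : Y.filter (fun x => x + 1 ≠ v) = Y.erase y0 := by
        ext z
        simp only [Finset.mem_filter, Finset.mem_erase]
        constructor
        · rintro ⟨hz, hzv⟩
          exact ⟨by omega, hz⟩
        · rintro ⟨hz2, hz⟩
          exact ⟨hz, by omega⟩
      rw [hset, Finset.card_erase_of_mem hy0]
      have : 0 < a := Finset.card_pos.mpr ⟨y0, hy0⟩
      omega
    · rw [if_neg h, Finset.filter_true_of_mem]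
      intro x hx hxv
      exact h (Finset.mem_image.mpr ⟨x, hx, hxv⟩)
  have hXcard : ∀ v : ℕ, (X.filter (fun x => x ≠ v ∧ x + 1 ≠ v)).card + 1
      = if (v ∈ X ∨ v ∈ X.image (fun x => x + 1)) then b else b + 1 := by
    intro v
    by_cases h1 : v ∈ X
    · rw [if_pos (Or.inl h1)]
      have hset : X.filter (fun x => x ≠ v ∧ x + 1 ≠ v) = X.erase v := by
        ext z
        simp only [Finset.mem_filter, Finset.mem_erase]
        constructor
        · rintro ⟨hz, hz1, hz2⟩
          exact ⟨hz1, hz⟩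
        · rintro ⟨hz1, hz⟩
          exact ⟨hz, hz1, fun hzv => hX2 v h1 z (hXY hz) hzv⟩
      rw [hset, Finset.card_erase_of_mem h1]
      have : 0 < b := Finset.card_pos.mpr ⟨v, h1⟩
      omega
    · by_cases h2 : v ∈ X.image (fun x => x + 1)
      · rw [if_pos (Or.inr h2)]
        obtain ⟨y0, hy0, hy0v⟩ := Finset.mem_image.mp h2
        have hset : X.filter (fun x => x ≠ v ∧ x + 1 ≠ v) = X.erase y0 := by
          ext z
          simp only [Finset.mem_filter, Finset.mem_erase]
          constructor
          · rintro ⟨hz, hz1, hz2⟩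
            exact ⟨by omega, hz⟩
          · rintro ⟨hz2, hz⟩
            exact ⟨hz, fun hzv => h1 (hzv ▸ hz), by omega⟩
        rw [hset, Finset.card_erase_of_mem hy0]
        have : 0 < b := Finset.card_pos.mpr ⟨y0, hy0⟩
        omega
      · rw [if_neg (by tauto), Finset.filter_true_of_mem]
        intro x hx
        refine ⟨fun h => h1 (h ▸ hx), fun h => h2 (Finset.mem_image.mpr ⟨x, hx, h⟩)⟩
  have hmem : ∀ v : ℕ, (v ∈ (Finset.range n).filter (fun v =>
        (Y.filter (fun x => x + 1 ≠ v)).card + 1 = i ∧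
        (X.filter (fun x => x ≠ v ∧ x + 1 ≠ v)).card + 1 = j))
      ↔ (v < n ∧ (if v ∈ Y.image (fun x => x + 1) then a else a + 1) = i
          ∧ (if (v ∈ X ∨ v ∈ X.image (fun x => x + 1)) then b else b + 1) = j) := by
    intro v
    simp only [Finset.mem_filter, Finset.mem_range, hYcard v, hXcard v]
  have hc00 : ∀ v, (v ∈ Y.image (fun x => x + 1) ∧ (v ∈ X ∨ v ∈ X.image (fun x => x + 1)))
      ↔ v ∈ X.image (fun x => x + 1) := by
    intro v
    constructor
    · rintro ⟨hA, hB | hB⟩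
      · exfalso
        obtain ⟨y0, hy0, hy0v⟩ := Finset.mem_image.mp hA
        exact hX2 v hB y0 hy0 hy0v
      · exact hB
    · intro h
      obtain ⟨y0, hy0, hy0v⟩ := Finset.mem_image.mp h
      exact ⟨Finset.mem_image.mpr ⟨y0, hXY hy0, hy0v⟩, Or.inr h⟩
  have hc01 : ∀ v, (v ∈ Y.image (fun x => x + 1) ∧ ¬(v ∈ X ∨ v ∈ X.image (fun x => x + 1)))
      ↔ v ∈ (Y \ X).image (fun x => x + 1) := by
    intro v
    constructor
    · rintro ⟨hA, hB⟩
      obtain ⟨y0, hy0, hy0v⟩ := Finset.mem_image.mp hA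
      refine Finset.mem_image.mpr ⟨y0, Finset.mem_sdiff.mpr ⟨hy0, fun hy0X => ?_⟩, hy0v⟩
      exact hB (Or.inr (Finset.mem_image.mpr ⟨y0, hy0X, hy0v⟩))
    · intro h
      obtain ⟨y0, hy0, hy0v⟩ := Finset.mem_image.mp h
      rw [Finset.mem_sdiff] at hy0
      refine ⟨Finset.mem_image.mpr ⟨y0, hy0.1, hy0v⟩, ?_⟩
      rintro (hB | hB)
      · exact hX2 v hB y0 hy0.1 hy0v
      · obtain ⟨y1, hy1, hy1v⟩ := Finset.mem_image.mp hB
        have he : y1 = y0 := by omega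
        exact hy0.2 (he ▸ hy1)
  have hc10 : ∀ v, (¬(v ∈ Y.image (fun x => x + 1)) ∧ (v ∈ X ∨ v ∈ X.image (fun x => x + 1)))
      ↔ v ∈ X := by
    intro v
    constructor
    · rintro ⟨hA, hB | hB⟩
      · exact hB
      · exfalso
        obtain ⟨y0, hy0, hy0v⟩ := Finset.mem_image.mp hB
        exact hA (Finset.mem_image.mpr ⟨y0, hXY hy0, hy0v⟩)
    · intro h
      refine ⟨fun hA => ?_, Or.inl h⟩
      obtain ⟨y0, hy0, hy0v⟩ := Finset.mem_image.mp hA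
      exact hX2 v h y0 hy0 hy0v
  unfold cfun
  by_cases h1 : i = a ∧ j = b
  · rw [if_pos h1]
    obtain ⟨hi1, hj1⟩ := h1
    have hset : (Finset.range n).filter (fun v =>
        (Y.filter (fun x => x + 1 ≠ v)).card + 1 = i ∧
        (X.filter (fun x => x ≠ v ∧ x + 1 ≠ v)).card + 1 = j)
        = X.image (fun x => x + 1) := by
      ext v
      rw [hmem v]
      constructor
      · rintro ⟨hv, hi, hj⟩
        apply (hc00 v).mp
        constructor
        · by_contra hA
          rw [if_neg hA] at hi
          omega
        · by_contra hB
          rw [if_neg hB] at hj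
          omega
      · intro h
        have h00 := (hc00 v).mpr h
        obtain ⟨y0, hy0, hy0v⟩ := Finset.mem_image.mp h
        refine ⟨by have := hXn y0 hy0; omega, ?_, ?_⟩
        · rw [if_pos h00.1]
          omega
        · rw [if_pos h00.2]
          omega
    rw [hset, Finset.card_image_of_injective _ hsucc_inj]
  · rw [if_neg h1]
    by_cases h2 : i = a ∧ j = b + 1
    · rw [if_pos h2]
      obtain ⟨hi1, hj1⟩ := h2
      have hset : (Finset.range n).filter (fun v =>
          (Y.filter (fun x => x + 1 ≠ v)).card + 1 = i ∧
          (X.filter (fun x => x ≠ v ∧ x + 1 ≠ v)).card + 1 = j)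
          = (Y \ X).image (fun x => x + 1) := by
        ext v
        rw [hmem v]
        constructor
        · rintro ⟨hv, hi, hj⟩
          apply (hc01 v).mp
          constructor
          · by_contra hA
            rw [if_neg hA] at hi
            omega
          · intro hB
            rw [if_pos hB] at hj
            omega
        · intro h
          have h01 := (hc01 v).mpr h
          obtain ⟨y0, hy0, hy0v⟩ := Finset.mem_image.mp h
          have hy0Y := (Finset.mem_sdiff.mp hy0).1
          refine ⟨by have := hY y0 hy0Y; omega, ?_, ?_⟩
          · rw [if_pos h01.1]
            omega
          · rw [if_neg h01.2]
            omega
      rw [hset, Finset.card_image_of_injective _ hsucc_inj, Finset.card_sdiff_of_subset hXY]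
    · rw [if_neg h2]
      by_cases h3 : i = a + 1 ∧ j = b
      · rw [if_pos h3]
        obtain ⟨hi1, hj1⟩ := h3
        have hset : (Finset.range n).filter (fun v =>
            (Y.filter (fun x => x + 1 ≠ v)).card + 1 = i ∧
            (X.filter (fun x => x ≠ v ∧ x + 1 ≠ v)).card + 1 = j)
            = X := by
          ext v
          rw [hmem v]
          constructor
          · rintro ⟨hv, hi, hj⟩
            apply ((hc10 v).mp ⟨?_, ?_⟩)
            · intro hA
              rw [if_pos hA] at hi
              omega
            · by_contra hB
              rw [if_neg hB] at hj
              omega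
          · intro h
            have h10 := (hc10 v).mpr h
            refine ⟨by have := hXn v h; omega, ?_, ?_⟩
            · rw [if_neg h10.1]
              omega
            · rw [if_pos h10.2]
              omega
        rw [hset]
      · rw [if_neg h3]
        by_cases h4 : i = a + 1 ∧ j = b + 1
        · rw [if_pos h4]
          obtain ⟨hi1, hj1⟩ := h4
          have hdisj : Disjoint (Y.image (fun x => x + 1)) X := by
            rw [Finset.disjoint_left]
            intro v hv hvX
            obtain ⟨y0, hy0, hy0v⟩ := Finset.mem_image.mp hv
            exact hX2 v hvX y0 hy0 hy0v
          have hsub : Y.image (fun x => x + 1) ∪ X ⊆ Finset.range n := by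
            intro v hv
            rw [Finset.mem_union] at hv
            rcases hv with h | h
            · obtain ⟨y0, hy0, hy0v⟩ := Finset.mem_image.mp h
              have := hY y0 hy0
              exact Finset.mem_range.mpr (by omega)
            · exact Finset.mem_range.mpr (by have := hXn v h; omega)
          have hset : (Finset.range n).filter (fun v =>
              (Y.filter (fun x => x + 1 ≠ v)).card + 1 = i ∧
              (X.filter (fun x => x ≠ v ∧ x + 1 ≠ v)).card + 1 = j)
              = Finset.range n \ (Y.image (fun x => x + 1) ∪ X) := by
            ext v
            rw [hmem v]
            simp only [Finset.mem_sdiff, Finset.mem_range, Finset.mem_union]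
            constructor
            · rintro ⟨hv, hi, hj⟩
              refine ⟨hv, ?_⟩
              rintro (hA | hB)
              · rw [if_pos hA] at hi
                omega
              · rw [if_pos (Or.inl hB)] at hj
                omega
            · rintro ⟨hv, hAB⟩
              push_neg at hAB
              obtain ⟨hA, hB⟩ := hAB
              have hB2 : ¬(v ∈ X ∨ v ∈ X.image (fun x => x + 1)) := by
                rintro (h | h)
                · exact hB h
                · obtain ⟨y0, hy0, hy0v⟩ := Finset.mem_image.mp h
                  exact hA (Finset.mem_image.mpr ⟨y0, hXY hy0, hy0v⟩)
              refine ⟨hv, ?_, ?_⟩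
              · rw [if_neg hA]
                omega
              · rw [if_neg hB2]
                omega
          rw [hset, Finset.card_sdiff_of_subset hsub, Finset.card_union_of_disjoint hdisj,
            Finset.card_image_of_injective _ hsucc_inj, Finset.card_range]
          omega
        · rw [if_neg h4]
          have hset : (Finset.range n).filter (fun v =>
              (Y.filter (fun x => x + 1 ≠ v)).card + 1 = i ∧
              (X.filter (fun x => x ≠ v ∧ x + 1 ≠ v)).card + 1 = j)
              = (∅ : Finset ℕ) := by
            ext v
            rw [hmem v]
            simp only [Finset.notMem_empty, iff_false]
            rintro ⟨hv, hi, hj⟩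
            by_cases hA : v ∈ Y.image (fun x => x + 1) <;>
              by_cases hB : (v ∈ X ∨ v ∈ X.image (fun x => x + 1))
            · rw [if_pos hA] at hi
              rw [if_pos hB] at hj
              exact h1 ⟨hi.symm, hj.symm⟩
            · rw [if_pos hA] at hi
              rw [if_neg hB] at hj
              exact h2 ⟨hi.symm, hj.symm⟩
            · rw [if_neg hA] at hi
              rw [if_pos hB] at hj
              exact h3 ⟨hi.symm, hj.symm⟩
            · rw [if_neg hA] at hi
              rw [if_neg hB] at hj
              exact h4 ⟨hi.symm, hj.symm⟩
          rw [hset, Finset.card_empty]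

/-! #### Word-level facts about `ofPerm` -/

lemma ofPerm_lt {n : ℕ} (π : Equiv.Perm (Fin n)) {x : ℕ} (hx : x < n) : ofPerm π x < n := by
  unfold ofPerm; rw [dif_pos hx]; exact (π ⟨x, hx⟩).isLt

lemma ofPerm_inj {n : ℕ} (π : Equiv.Perm (Fin n)) {x y : ℕ} (hx : x < n) (hy : y < n)
    (h : ofPerm π x = ofPerm π y) : x = y := by
  unfold ofPerm at h; rw [dif_pos hx, dif_pos hy] at h
  have := π.injective (Fin.val_injective h)
  simpa using congrArg Fin.val this

lemma ofPerm_inv_ofPerm {n : ℕ} (π : Equiv.Perm (Fin n)) {x : ℕ} (hx : x < n) :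
    ofPerm π⁻¹ (ofPerm π x) = x := by
  unfold ofPerm
  rw [dif_pos hx, dif_pos (π ⟨x, hx⟩).isLt]
  simp

lemma ofPerm_ofPerm_inv {n : ℕ} (π : Equiv.Perm (Fin n)) {p : ℕ} (hp : p < n) :
    ofPerm π (ofPerm π⁻¹ p) = p := by
  have := ofPerm_inv_ofPerm π⁻¹ hp
  simpa using this

lemma perm_ext_ofPerm {n : ℕ} (π π' : Equiv.Perm (Fin n))
    (h : ∀ x < n, ofPerm π x = ofPerm π' x) : π = π' := by
  ext x
  have := h x.1 x.isLt
  unfold ofPerm at this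
  rw [dif_pos x.isLt, dif_pos x.isLt] at this
  simpa using this

/-! #### Cluster side: the insertion word -/

def insW (n v : ℕ) (u : ℕ → ℕ) : ℕ → ℕ := fun x =>
  if x < v then u x else if x = v then n else if x ≤ n then u (x - 1) else x

lemma insW_lo {n v : ℕ} {u : ℕ → ℕ} {x : ℕ} (h : x < v) : insW n v u x = u x := if_pos h

lemma insW_at {n v : ℕ} {u : ℕ → ℕ} : insW n v u v = n := by
  unfold insW; rw [if_neg (lt_irrefl v), if_pos rfl]

lemma insW_mid {n v : ℕ} {u : ℕ → ℕ} {x : ℕ} (h1 : v < x) (h2 : x ≤ n) :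
    insW n v u x = u (x - 1) := by
  unfold insW; rw [if_neg (by omega), if_neg (by omega), if_pos h2]

lemma insW_hi {n v : ℕ} {u : ℕ → ℕ} {x : ℕ} (hv : v < n) (h2 : n < x) : insW n v u x = x := by
  unfold insW; rw [if_neg (by omega), if_neg (by omega), if_neg (by omega)]

lemma shiftIns_lt {v d a b : ℕ} (h : a < b) : shiftIns v d a < shiftIns v d b := by
  unfold shiftIns; split_ifs <;> omega

def desSet (n : ℕ) (u : ℕ → ℕ) : Finset ℕ :=
  (Finset.range (n - 1)).filter (fun x => u (x + 1) < u x)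

def lpkSet (n : ℕ) (u : ℕ → ℕ) : Finset ℕ :=
  (Finset.range (n - 1)).filter
    (fun x => (1 ≤ x ∧ u (x - 1) < u x ∧ u (x + 1) < u x) ∨ (x = 0 ∧ u 1 < u 0))

lemma desNum_eq (n : ℕ) (u : ℕ → ℕ) : desNum n u = (desSet n u).card := rfl

lemma lpkNum_eq (n : ℕ) (u : ℕ → ℕ) : lpkNum n u = (lpkSet n u).card := rfl

lemma lpkSet_subset_desSet (n : ℕ) (u : ℕ → ℕ) : lpkSet n u ⊆ desSet n u := by
  intro x hx
  simp only [lpkSet, desSet, Finset.mem_filter, Finset.mem_range] at *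
  refine ⟨hx.1, ?_⟩
  rcases hx.2 with ⟨_, _, h⟩ | ⟨h0, h⟩
  · exact h
  · subst h0; exact h

lemma lpkSet_succ (n : ℕ) (u : ℕ → ℕ) {x : ℕ} (hx : x ∈ lpkSet n u) :
    x + 1 ∉ lpkSet n u := by
  simp only [lpkSet, Finset.mem_filter, Finset.mem_range] at *
  rintro ⟨-, ⟨-, h1, -⟩ | ⟨h, -⟩⟩
  · rcases hx.2 with ⟨-, -, h⟩ | ⟨h0, h⟩
    · simp at h1; omega
    · subst h0; simp at h1; omega
  · omega

lemma lpkSet_des (n : ℕ) (u : ℕ → ℕ) {x y : ℕ} (hx : x ∈ lpkSet n u)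
    (hy : y ∈ desSet n u) : y + 1 ≠ x := by
  simp only [lpkSet, desSet, Finset.mem_filter, Finset.mem_range] at *
  rintro rfl
  rcases hx.2 with ⟨-, h1, -⟩ | ⟨h0, -⟩
  · simp at h1; omega
  · omega

lemma desSet_lt (n : ℕ) (u : ℕ → ℕ) {x : ℕ} (hx : x ∈ desSet n u) : x + 1 < n := by
  simp only [desSet, Finset.mem_filter, Finset.mem_range] at hx
  omega

lemma des_insW (n v r : ℕ) (u : ℕ → ℕ) (hr : 1 ≤ r) (hv : v < n)
    (hu : ∀ x, x < n → u x < n) :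
    desSet (n + r) (insW n v u)
      = insert v (((desSet n u).filter (fun x => x + 1 ≠ v)).image (shiftIns v 1)) := by
  ext x
  simp only [desSet, Finset.mem_insert, Finset.mem_image, Finset.mem_filter, Finset.mem_range]
  constructor
  · rintro ⟨hxr, hdes⟩
    rcases Nat.lt_trichotomy x v with hx | hx | hx
    · rcases Nat.lt_or_ge (x + 1) v with hx1 | hx1
      · right
        refine ⟨x, ⟨⟨by omega, ?_⟩, by omega⟩, if_pos hx⟩
        rwa [insW_lo hx1, insW_lo hx] at hdes
      · exfalso
        have hx2 : x + 1 = v := by omega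
        rw [hx2, insW_at, insW_lo hx] at hdes
        have := hu x (by omega)
        omega
    · left; omega
    · rcases Nat.lt_or_ge x n with hxn | hxn
      · right
        refine ⟨x - 1, ⟨⟨by omega, ?_⟩, by omega⟩, ?_⟩
        · rw [insW_mid (show v < x + 1 by omega) (show x + 1 ≤ n by omega),
            insW_mid hx (show x ≤ n by omega)] at hdes
          have e2 : x + 1 - 1 = x := by omega
          rw [e2] at hdes
          have e1 : x - 1 + 1 = x := by omega
          rw [e1]
          exact hdes
        · unfold shiftIns
          rw [if_neg (show ¬ (x - 1 < v) by omega)]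
          omega
      · exfalso
        have hxn' : x = n ∨ n < x := by omega
        rcases hxn' with hxe | hxe
        · rw [hxe, insW_hi hv (show n < n + 1 by omega),
            insW_mid (show v < n by omega) le_rfl] at hdes
          have := hu (n - 1) (by omega)
          omega
        · rw [insW_hi hv (show n < x + 1 by omega), insW_hi hv hxe] at hdes
          omega
  · rintro (hxv | ⟨y, ⟨⟨hy, hdes⟩, hyv⟩, hsh⟩)
    · rw [hxv]
      refine ⟨by omega, ?_⟩
      rw [insW_at, insW_mid (show v < v + 1 by omega) (show v + 1 ≤ n by omega)]
      have e : v + 1 - 1 = v := by omega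
      rw [e]
      exact hu v (by omega)
    · rw [← hsh]
      unfold shiftIns
      split_ifs with h
      · refine ⟨by omega, ?_⟩
        rw [insW_lo (show y + 1 < v by omega), insW_lo h]
        exact hdes
      · refine ⟨by omega, ?_⟩
        rw [insW_mid (show v < y + 1 + 1 by omega) (show y + 1 + 1 ≤ n by omega),
          insW_mid (show v < y + 1 by omega) (show y + 1 ≤ n by omega)]
        have e1 : y + 1 + 1 - 1 = y + 1 := by omega
        have e2 : y + 1 - 1 = y := by omega
        rw [e1, e2]
        exact hdes

lemma lpk_insW (n v r : ℕ) (u : ℕ → ℕ) (hr : 1 ≤ r) (hv : v < n)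
    (hu : ∀ x, x < n → u x < n) :
    lpkSet (n + r) (insW n v u)
      = insert v (((lpkSet n u).filter (fun x => x ≠ v ∧ x + 1 ≠ v)).image (shiftIns v 1)) := by
  ext x
  simp only [lpkSet, Finset.mem_insert, Finset.mem_image, Finset.mem_filter, Finset.mem_range]
  constructor
  · rintro ⟨hxr, hp⟩
    rcases Nat.lt_trichotomy x v with hx | hx | hx
    · rcases Nat.lt_or_ge (x + 1) v with hx1 | hx1
      · right
        refine ⟨x, ⟨⟨by omega, ?_⟩, by omega, by omega⟩, if_pos hx⟩
        rcases hp with ⟨h1, h2, h3⟩ | ⟨h0, h01⟩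
        · rw [insW_lo (show x - 1 < v by omega), insW_lo hx] at h2
          rw [insW_lo hx1, insW_lo hx] at h3
          exact Or.inl ⟨h1, h2, h3⟩
        · rw [insW_lo (show (1:ℕ) < v by omega), insW_lo (show (0:ℕ) < v by omega)] at h01
          exact Or.inr ⟨h0, h01⟩
      · exfalso
        have hx2 : x + 1 = v := by omega
        rcases hp with ⟨h1, h2, h3⟩ | ⟨h0, h01⟩
        · rw [hx2, insW_at, insW_lo hx] at h3
          have := hu x (by omega)
          omega
        · have hv1 : v = 1 := by omega
          rw [hv1] at h01
          rw [insW_at, insW_lo (show (0:ℕ) < 1 by omega)] at h01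
          have := hu 0 (by omega)
          omega
    · left; omega
    · have hx0 : x ≠ 0 := by omega
      rcases hp with ⟨h1, h2, h3⟩ | ⟨h0, h01⟩
      swap
      · exact absurd h0 hx0
      rcases Nat.lt_or_ge x n with hxn | hxn
      · rcases Nat.eq_or_lt_of_le (show v ≤ x - 1 by omega) with hxv | hxv
        · exfalso
          rw [insW_mid hx (show x ≤ n by omega), ← hxv, insW_at] at h2
          have := hu v (by omega)
          omega
        · right
          refine ⟨x - 1, ⟨⟨by omega, ?_⟩, by omega, by omega⟩, ?_⟩
          · rw [insW_mid hx (show x ≤ n by omega),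
              insW_mid (show v < x - 1 by omega) (show x - 1 ≤ n by omega)] at h2
            rw [insW_mid (show v < x + 1 by omega) (show x + 1 ≤ n by omega),
              insW_mid hx (show x ≤ n by omega)] at h3
            have e2 : x + 1 - 1 = x := by omega
            rw [e2] at h3
            left
            have e3 : x - 1 + 1 = x := by omega
            refine ⟨by omega, ?_, ?_⟩
            · exact h2
            · rw [e3]
              exact h3
          · unfold shiftIns
            rw [if_neg (show ¬ (x - 1 < v) by omega)]
            omega
      · exfalso
        have hxn' : x = n ∨ n < x := by omega
        rcases hxn' with hxe | hxe
        · rw [hxe, insW_hi hv (show n < n + 1 by omega),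
            insW_mid (show v < n by omega) le_rfl] at h3
          have := hu (n - 1) (by omega)
          omega
        · rw [insW_hi hv (show n < x + 1 by omega), insW_hi hv hxe] at h3
          omega
  · rintro (hxv | ⟨y, ⟨⟨hy, hp⟩, hyv, hyv1⟩, hsh⟩)
    · rw [hxv]
      refine ⟨by omega, ?_⟩
      by_cases hv0 : v = 0
      · right
        subst hv0
        refine ⟨rfl, ?_⟩
        rw [insW_at, insW_mid (show (0:ℕ) < 1 by omega) (show 1 ≤ n by omega)]
        have e : (1:ℕ) - 1 = 0 := rfl
        rw [e]
        exact hu 0 (by omega)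
      · left
        refine ⟨by omega, ?_, ?_⟩
        · rw [insW_at, insW_lo (show v - 1 < v by omega)]
          exact hu (v - 1) (by omega)
        · rw [insW_at, insW_mid (show v < v + 1 by omega) (show v + 1 ≤ n by omega)]
          have e : v + 1 - 1 = v := by omega
          rw [e]
          exact hu v (by omega)
    · rw [← hsh]
      unfold shiftIns
      split_ifs with h
      · refine ⟨by omega, ?_⟩
        rcases hp with ⟨h1, h2, h3⟩ | ⟨h0, h01⟩
        · left
          rw [insW_lo (show y - 1 < v by omega), insW_lo h, insW_lo (show y + 1 < v by omega)]
          exact ⟨h1, h2, h3⟩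
        · right
          refine ⟨h0, ?_⟩
          rw [insW_lo (show (1:ℕ) < v by omega), insW_lo (show (0:ℕ) < v by omega)]
          exact h01
      · refine ⟨by omega, ?_⟩
        rcases hp with ⟨h1, h2, h3⟩ | ⟨h0, h01⟩
        · left
          refine ⟨by omega, ?_, ?_⟩
          · have e : y + 1 - 1 = y := by omega
            rw [e, insW_mid (show v < y by omega) (show y ≤ n by omega),
              insW_mid (show v < y + 1 by omega) (show y + 1 ≤ n by omega), e]
            exact h2
          · have e : y + 1 + 1 - 1 = y + 1 := by omega
            have e2 : y + 1 - 1 = y := by omega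
            rw [insW_mid (show v < y + 1 + 1 by omega) (show y + 1 + 1 ≤ n by omega),
              insW_mid (show v < y + 1 by omega) (show y + 1 ≤ n by omega), e, e2]
            exact h3
        · exfalso
          omega

/-! #### Cluster side: the insertion permutation -/

lemma insW_lt_n {n v : ℕ} {u : ℕ → ℕ} (hv : v < n) (hu : ∀ x, x < n → u x < n)
    {x : ℕ} : insW n v u x < n ↔ (x ≠ v ∧ x ≤ n) := by
  unfold insW
  split_ifs with h1 h2 h3
  · constructor
    · intro _; omega
    · intro _; exact hu x (by omega)
  · omega
  · constructor
    · intro _; omega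
    · intro _; exact hu (x - 1) (by omega)
  · omega

lemma insW_inj {n v : ℕ} {u : ℕ → ℕ} (hv : v < n) (hu : ∀ x, x < n → u x < n)
    (huinj : ∀ x, x < n → ∀ y, y < n → u x = u y → x = y)
    {x y : ℕ} (h : insW n v u x = insW n v u y) : x = y := by
  have hx := @insW_lt_n n v u hv hu x
  have hy := @insW_lt_n n v u hv hu y
  unfold insW at h hx hy
  split_ifs at h hx hy <;>
    first
      | rfl
      | omega
      | (exact huinj _ (by omega) _ (by omega) h)
      | (have := huinj _ (by omega) _ (by omega) h; omega)
      | (have := hu x (by omega); omega)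
      | (have := hu y (by omega); omega)
      | (have := hu (x-1) (by omega); omega)
      | (have := hu (y-1) (by omega); omega)

def insE (n N v : ℕ) (hv : v < n) (hN : n < N) (π : Equiv.Perm (Fin n)) :
    Equiv.Perm (Fin N) :=
  Equiv.ofBijective
    (fun x => ⟨insW n v (ofPerm π) x.1, by
      have hb := x.isLt
      have hu : ∀ y, y < n → ofPerm π y < n := fun y hy => ofPerm_lt π hy
      unfold insW
      split_ifs with h1 h2 h3
      · exact lt_trans (hu _ (by omega)) hN
      · exact hN
      · exact lt_trans (hu _ (by omega)) hN
      · exact hb⟩)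
    (Finite.injective_iff_bijective.mp (by
      intro x y h
      have h' : insW n v (ofPerm π) x.1 = insW n v (ofPerm π) y.1 := congrArg Fin.val h
      exact Fin.ext (insW_inj hv (fun y hy => ofPerm_lt π hy)
        (fun a ha b hb => ofPerm_inj π ha hb) h')))

lemma ofPerm_insE {n N v : ℕ} (hv : v < n) (hN : n < N) (π : Equiv.Perm (Fin n))
    {x : ℕ} (hx : x < N) : ofPerm (insE n N v hv hN π) x = insW n v (ofPerm π) x := by
  unfold ofPerm insE
  rw [dif_pos hx]
  rfl

lemma ofPerm_insE_inv {n N v : ℕ} (hv : v < n) (hN : n < N) (π : Equiv.Perm (Fin n))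
    {p : ℕ} (hp : p < N) :
    ofPerm (insE n N v hv hN π)⁻¹ p
      = if p < n then shiftIns v 1 (ofPerm π⁻¹ p) else if p = n then v else p := by
  have key : ∀ q, (hq : q < N) → insW n v (ofPerm π) q = p →
      ofPerm (insE n N v hv hN π)⁻¹ p = q := by
    intro q hq hqp
    have hval : ((insE n N v hv hN π) ⟨q, hq⟩ : ℕ) = p := by
      have h1 := ofPerm_insE hv hN π hq
      unfold ofPerm at h1
      rw [dif_pos hq] at h1
      exact h1.trans hqp
    have h2 : (insE n N v hv hN π)⁻¹ ⟨p, hp⟩ = ⟨q, hq⟩ := by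
      rw [show (insE n N v hv hN π)⁻¹ = (insE n N v hv hN π).symm from rfl,
        Equiv.symm_apply_eq]
      exact (Fin.ext hval).symm
    unfold ofPerm
    rw [dif_pos hp, h2]
  rcases Nat.lt_trichotomy p n with h | h | h
  · rw [if_pos h]
    have hy : ofPerm π⁻¹ p < n := ofPerm_lt π⁻¹ h
    unfold shiftIns
    split_ifs with h2
    · exact key _ (by omega) (by rw [insW_lo h2]; exact ofPerm_ofPerm_inv π h)
    · refine key _ (by omega) ?_
      rw [insW_mid (by omega) (by omega)]
      have e : ofPerm π⁻¹ p + 1 - 1 = ofPerm π⁻¹ p := by omega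
      rw [e]
      exact ofPerm_ofPerm_inv π h
  · rw [if_neg (by omega), if_pos h]
    refine key v (by omega) ?_
    rw [insW_at, h]
  · rw [if_neg (by omega), if_neg (by omega)]
    exact key p hp (insW_hi hv h)

/-! #### Spine and forced-top lemmas for clusters -/

lemma chain_mono {r k : ℕ} {w : ℕ → ℕ} (hC : IsCluster r k w) {j : ℕ} (hj : j < k)
    {l1 l2 : ℕ} (h1 : 2 ≤ l1) (h12 : l1 ≤ l2) (h2 : l2 ≤ r) :
    w (r * j + l1) ≤ w (r * j + l2) := by
  induction l2, h12 using Nat.le_induction with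
  | base => exact le_rfl
  | succ l2 hl2 ih =>
      have step := ((hC j hj).2.2 l2 (by omega) (by omega)).le
      exact le_trans (ih (by omega)) step

lemma spine {r k : ℕ} {w : ℕ → ℕ} (hC : IsCluster r k w) (hr : 2 ≤ r) :
    ∀ j, j ≤ k → ∀ q, q < r * j → w q < w (r * j) := by
  intro j
  induction j with
  | zero => intro _ q hq; omega
  | succ j ih =>
      intro hj q hq
      have hjk : j < k := by omega
      obtain ⟨c1, c2, c3⟩ := hC j hjk
      have hstep : w (r * j) < w (r * (j + 1)) := by
        have : w (r * j + 2) ≤ w (r * j + r) := chain_mono hC hjk (by omega) (by omega) le_rfl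
        have hrw : r * j + r = r * (j + 1) := by ring
        rw [hrw] at this
        omega
      have hrw : r * (j + 1) = r * j + r := by ring
      rcases Nat.lt_or_ge q (r * j) with hq' | hq'
      · exact lt_trans (ih (by omega) q hq') hstep
      · rcases Nat.eq_or_lt_of_le hq' with rfl | hq''
        · exact hstep
        · rcases Nat.eq_or_lt_of_le hq'' with hq3 | hq3
          · have : q = r * j + 1 := by omega
            subst this; exact lt_trans c1 hstep
          · -- q = r*j + l with 2 ≤ l ≤ r - 1
            have hl : 2 ≤ q - r * j ∧ q - r * j < r := by omega
            have e1 : w q < w (q + 1) := by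
              have := c3 (q - r * j) hl.1 hl.2
              have hq4 : r * j + (q - r * j) = q := by omega
              rw [hq4] at this
              have hq5 : r * j + (q - r * j) + 1 = q + 1 := by omega
              omega
            have e2 : w (q + 1) ≤ w (r * j + r) := by
              have := chain_mono hC hjk (l1 := q - r * j + 1) (l2 := r) (by omega) (by omega) le_rfl
              have hq4 : r * j + (q - r * j + 1) = q + 1 := by omega
              rwa [hq4] at this
            rw [hrw]
            omega

lemma val_ge {w : ℕ → ℕ} {p : ℕ}
    (hinj : ∀ x, x ≤ p → ∀ y, y ≤ p → w x = w y → x = y)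
    (h : ∀ q, q < p → w q < w p) : p ≤ w p := by
  have hsub : (Finset.range (p + 1)).image w ⊆ Finset.range (w p + 1) := by
    intro y hy
    simp only [Finset.mem_image, Finset.mem_range] at *
    obtain ⟨x, hx, rfl⟩ := hy
    rcases Nat.lt_or_ge x p with hx' | hx'
    · exact lt_of_lt_of_le (h x hx') (by omega)
    · have : x = p := by omega
      subst this; omega
  have hcard := Finset.card_le_card hsub
  rw [Finset.card_image_of_injOn, Finset.card_range] at hcard
  · rw [Finset.card_range] at hcard; omega
  · intro x hx y hy hxy
    simp only [Finset.coe_range, Set.mem_Iio] at hx hy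
    exact hinj x (by omega) y (by omega) hxy

lemma cluster_max {r k : ℕ} {w : ℕ → ℕ} (hC : IsCluster r k w) (hr : 2 ≤ r)
    (hw : ∀ p, p < r * k + 1 → w p < r * k + 1)
    (hinj : ∀ x, x < r * k + 1 → ∀ y, y < r * k + 1 → w x = w y → x = y) :
    w (r * k) = r * k := by
  have h1 := spine hC hr k le_rfl
  have h2 := val_ge (p := r * k)
    (fun x hx y hy hxy => hinj x (by omega) y (by omega) hxy) h1
  have := hw (r * k) (by omega)
  omega

lemma below_top {r k : ℕ} {w : ℕ → ℕ} (hC : IsCluster r (k + 1) w) (hr : 2 ≤ r)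
    {l : ℕ} (hl2 : 2 ≤ l) (hlr : l ≤ r) :
    ∀ q, q < r * k + l → w q < w (r * k + l) := by
  intro q hq
  obtain ⟨c1, c2, c3⟩ := hC k (by omega)
  have hchain : w (r * k + 2) ≤ w (r * k + l) :=
    chain_mono hC (by omega) (by omega) hl2 hlr
  rcases Nat.lt_or_ge q (r * k) with h | h
  · have := spine hC hr k (by omega) q h
    omega
  · rcases Nat.eq_or_lt_of_le h with h1 | h1
    · rw [← h1]
      omega
    · rcases Nat.eq_or_lt_of_le h1 with h2 | h2
      · have hq1 : q = r * k + 1 := by omega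
        rw [hq1]
        omega
      · have e1 : w q < w (q + 1) := by
          have := c3 (q - r * k) (by omega) (by omega)
          have e : r * k + (q - r * k) = q := by omega
          rw [e] at this
          exact this
        have e2 : w (q + 1) ≤ w (r * k + l) := by
          have := chain_mono hC (j := k) (by omega) (l1 := q - r * k + 1) (l2 := l)
            (by omega) (by omega) (by omega)
          have e : r * k + (q - r * k + 1) = q + 1 := by omega
          rwa [e] at this
        omega

lemma top_forced {r k : ℕ} {w : ℕ → ℕ} (hC : IsCluster r (k + 1) w) (hr : 2 ≤ r)
    (hw : ∀ p, p < r * (k + 1) + 1 → w p < r * (k + 1) + 1)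
    (hinj : ∀ x, x < r * (k + 1) + 1 → ∀ y, y < r * (k + 1) + 1 → w x = w y → x = y) :
    ∀ l, 2 ≤ l → l ≤ r → w (r * k + l) = r * k + l := by
  have hrw : r * (k + 1) = r * k + r := by ring
  have key : ∀ d l, 2 ≤ l → l ≤ r → r - l = d → w (r * k + l) = r * k + l := by
    intro d
    induction d with
    | zero =>
        intro l hl2 hlr hd
        have hlr2 : l = r := by omega
        have h1 : ∀ q, q < r * k + l → w q < w (r * k + l) := below_top hC hr hl2 hlr
        have h2 := val_ge (p := r * k + l)
          (fun x hx y hy => hinj x (by omega) y (by omega)) h1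
        have h3 := hw (r * k + l) (by omega)
        omega
    | succ d ih =>
        intro l hl2 hlr hd
        have hlr' : l < r := by omega
        have hup : w (r * k + l) < w (r * k + l + 1) := (hC k (by omega)).2.2 l hl2 hlr'
        have hnext := ih (l + 1) (by omega) (by omega) (by omega)
        have e : r * k + (l + 1) = r * k + l + 1 := by omega
        rw [e] at hnext
        have h1 : ∀ q, q < r * k + l → w q < w (r * k + l) := below_top hC hr hl2 (by omega)
        have h2 := val_ge (p := r * k + l)
          (fun x hx y hy => hinj x (by omega) y (by omega)) h1
        omega
  intro l hl2 hlr
  exact key (r - l) l hl2 hlr rfl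

lemma isCluster_insE {r k v : ℕ} (hr : 2 ≤ r) (hv : v < r * k + 1)
    (hN : r * k + 1 < r * (k + 1) + 1) (π : Equiv.Perm (Fin (r * k + 1)))
    (hC : IsCluster r k (ofPerm π⁻¹)) :
    IsCluster r (k + 1) (ofPerm (insE (r * k + 1) (r * (k + 1) + 1) v hv hN π)⁻¹) := by
  have hrw : r * (k + 1) = r * k + r := by ring
  have hwb : ∀ p, p < r * k + 1 → ofPerm π⁻¹ p < r * k + 1 := fun p hp => ofPerm_lt π⁻¹ hp
  have hwinj : ∀ x, x < r * k + 1 → ∀ y, y < r * k + 1 → ofPerm π⁻¹ x = ofPerm π⁻¹ y → x = y :=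
    fun x hx y hy => ofPerm_inj π⁻¹ hx hy
  have hmax : ofPerm π⁻¹ (r * k) = r * k := cluster_max hC hr hwb hwinj
  have heval : ∀ p, p < r * (k + 1) + 1 →
      ofPerm (insE (r * k + 1) (r * (k + 1) + 1) v hv hN π)⁻¹ p
        = if p < r * k + 1 then shiftIns v 1 (ofPerm π⁻¹ p) else if p = r * k + 1 then v else p :=
    fun p hp => ofPerm_insE_inv hv hN π hp
  intro j hj
  rcases Nat.lt_or_ge j k with hjk | hjk
  · obtain ⟨c1, c2, c3⟩ := hC j hjk
    have hb : r * j + r ≤ r * k := by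
      have := Nat.mul_le_mul_left r (show j + 1 ≤ k by omega)
      have e : r * (j + 1) = r * j + r := by ring
      omega
    have hev : ∀ p, p ≤ r * j + r →
        ofPerm (insE (r * k + 1) (r * (k + 1) + 1) v hv hN π)⁻¹ p
          = shiftIns v 1 (ofPerm π⁻¹ p) := by
      intro p hp
      rw [heval p (by omega), if_pos (by omega)]
    refine ⟨?_, ?_, ?_⟩
    · rw [hev _ (by omega), hev _ (by omega)]
      exact shiftIns_lt c1
    · rw [hev _ (by omega), hev _ (by omega)]
      exact shiftIns_lt c2
    · intro l h2 hl
      rw [hev _ (by omega), hev _ (by omega)]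
      exact shiftIns_lt (c3 l h2 hl)
  · have hjk2 : k = j := by omega
    subst hjk2
    refine ⟨?_, ?_, ?_⟩
    · rw [heval (r * k + 1) (by omega), heval (r * k) (by omega),
        if_neg (by omega), if_pos rfl, if_pos (by omega), hmax]
      unfold shiftIns
      split_ifs <;> omega
    · rw [heval (r * k) (by omega), heval (r * k + 2) (by omega),
        if_pos (by omega), if_neg (by omega), if_neg (by omega), hmax]
      unfold shiftIns
      split_ifs <;> omega
    · intro l h2 hl
      rw [heval (r * k + l) (by omega), heval (r * k + l + 1) (by omega),
        if_neg (show ¬(r * k + l < r * k + 1) by omega),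
        if_neg (show ¬(r * k + l = r * k + 1) by omega),
        if_neg (show ¬(r * k + l + 1 < r * k + 1) by omega),
        if_neg (show ¬(r * k + l + 1 = r * k + 1) by omega)]
      omega


/-! #### Generic summation helpers -/

lemma filter_product_card {α β : Type*} (s : Finset α) (t : Finset β) (P : α × β → Prop) :
    ((s ×ˢ t).filter P).card = ∑ p ∈ s, (t.filter (fun q => P (p, q))).card := by
  classical
  rw [Finset.card_filter, Finset.sum_product]
  exact Finset.sum_congr rfl (fun p _ => (Finset.card_filter _ _).symm)

lemma sum_stats {α : Type*} (C : Finset α) (f g : α → ℕ) (n : ℕ)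
    (hf : ∀ x ∈ C, f x < n) (hg : ∀ x ∈ C, g x < n) (F : ℕ → ℕ → ℕ) :
    ∑ x ∈ C, F (f x) (g x)
      = ∑ a ∈ Finset.range n, ∑ b ∈ Finset.range n,
          (C.filter (fun x => f x = a ∧ g x = b)).card * F a b := by
  classical
  have hmap : ∀ x ∈ C, (f x, g x) ∈ Finset.range n ×ˢ Finset.range n := fun x hx =>
    Finset.mem_product.mpr ⟨Finset.mem_range.mpr (hf x hx), Finset.mem_range.mpr (hg x hx)⟩
  have hfib := Finset.sum_fiberwise_of_maps_to hmap (fun x => F (f x) (g x))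
  rw [← hfib, Finset.sum_product]
  apply Finset.sum_congr rfl
  intro a _
  apply Finset.sum_congr rfl
  intro b _
  have hcongr : C.filter (fun x => (f x, g x) = (a, b)) = C.filter (fun x => f x = a ∧ g x = b) := by
    apply Finset.filter_congr
    intro x _
    simp [Prod.ext_iff]
  rw [hcongr]
  calc ∑ x ∈ C.filter (fun x => f x = a ∧ g x = b), F (f x) (g x)
      = ∑ x ∈ C.filter (fun x => f x = a ∧ g x = b), F a b :=
        Finset.sum_congr rfl (fun x hx => by
          obtain ⟨-, h1, h2⟩ := Finset.mem_filter.mp hx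
          rw [h1, h2])
    _ = _ := by rw [Finset.sum_const, smul_eq_mul]

/-! #### The cluster-side recurrence -/

def insE0 (n N : ℕ) (π : Equiv.Perm (Fin n)) (v : ℕ) : Equiv.Perm (Fin N) :=
  if h : v < n ∧ n < N then insE n N v h.1 h.2 π else 1

lemma pt_rec (r k i j : ℕ) (hr : 2 ≤ r) :
    ptnum r (k + 1) i j
      = ∑ a ∈ Finset.range (r * k + 1), ∑ b ∈ Finset.range (r * k + 1),
          ptnum r k a b * cfun (r * k + 1) a b i j := by
  classical
  have hmul : r * (k + 1) = r * k + r := by ring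
  have hnN : r * k + 1 < r * (k + 1) + 1 := by omega
  -- Step A
  have hT : ptnum r (k + 1) i j
      = (Finset.univ.filter (fun τ : Equiv.Perm (Fin (r * (k + 1) + 1)) =>
          IsCluster r (k + 1) (ofPerm τ⁻¹) ∧ desNum (r * (k + 1) + 1) (ofPerm τ) = i ∧
            lpkNum (r * (k + 1) + 1) (ofPerm τ) = j)).card := by
    unfold ptnum clusterSet
    rw [Finset.filter_filter]
  -- Step B : bijection with pairs
  have hbij : (Finset.univ.filter (fun τ : Equiv.Perm (Fin (r * (k + 1) + 1)) =>
          IsCluster r (k + 1) (ofPerm τ⁻¹) ∧ desNum (r * (k + 1) + 1) (ofPerm τ) = i ∧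
            lpkNum (r * (k + 1) + 1) (ofPerm τ) = j)).card
      = (((Finset.univ.filter (fun π : Equiv.Perm (Fin (r * k + 1)) =>
              IsCluster r k (ofPerm π⁻¹))) ×ˢ Finset.range (r * k + 1)).filter
          (fun pv => desNum (r * (k + 1) + 1) (ofPerm (insE0 (r * k + 1) (r * (k + 1) + 1) pv.1 pv.2)) = i ∧
            lpkNum (r * (k + 1) + 1) (ofPerm (insE0 (r * k + 1) (r * (k + 1) + 1) pv.1 pv.2)) = j)).card := by
    symm
    apply Finset.card_bij (fun pv _ => insE0 (r * k + 1) (r * (k + 1) + 1) pv.1 pv.2)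
    · rintro ⟨π, v⟩ hpv
      simp only [Finset.mem_filter, Finset.mem_product, Finset.mem_range, Finset.mem_univ,
        true_and] at hpv
      obtain ⟨⟨hC, hv⟩, hst⟩ := hpv
      simp only [Finset.mem_filter, Finset.mem_univ, true_and]
      refine ⟨?_, hst.1, hst.2⟩
      unfold insE0
      rw [dif_pos ⟨hv, hnN⟩]
      exact isCluster_insE hr hv hnN π hC
    · rintro ⟨π, v⟩ hpv ⟨π', v'⟩ hpv' heq
      simp only [Finset.mem_filter, Finset.mem_product, Finset.mem_range, Finset.mem_univ,
        true_and] at hpv hpv'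
      obtain ⟨⟨hC, hv⟩, -⟩ := hpv
      obtain ⟨⟨hC', hv'⟩, -⟩ := hpv'
      unfold insE0 at heq
      rw [dif_pos ⟨hv, hnN⟩, dif_pos ⟨hv', hnN⟩] at heq
      have hw : ∀ x, x < r * (k + 1) + 1 →
          insW (r * k + 1) v (ofPerm π) x = insW (r * k + 1) v' (ofPerm π') x := by
        intro x hx
        rw [← ofPerm_insE hv hnN π hx, ← ofPerm_insE hv' hnN π' hx, heq]
      have hvv : v = v' := by
        by_contra hne
        rcases Nat.lt_or_ge v v' with hlt | hge
        · have h1 := hw v (by omega)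
          rw [insW_at, insW_lo hlt] at h1
          have := ofPerm_lt π' (show v < r * k + 1 by omega)
          omega
        · have hlt : v' < v := by omega
          have h1 := hw v' (by omega)
          rw [insW_lo hlt, insW_at] at h1
          have := ofPerm_lt π (show v' < r * k + 1 by omega)
          omega
      subst hvv
      have hww : π = π' := by
        apply perm_ext_ofPerm
        intro x hx
        rcases Nat.lt_or_ge x v with hxv | hxv
        · have h1 := hw x (by omega)
          rwa [insW_lo hxv, insW_lo hxv] at h1
        · have h1 := hw (x + 1) (by omega)
          rw [insW_mid (by omega) (by omega), insW_mid (by omega) (by omega)] at h1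
          have e : x + 1 - 1 = x := by omega
          rwa [e] at h1
      rw [hww]
    · intro τ hτ
      simp only [Finset.mem_filter, Finset.mem_univ, true_and] at hτ
      obtain ⟨hCτ, hdes, hlpk⟩ := hτ
      have hwb : ∀ p, p < r * (k + 1) + 1 → ofPerm τ⁻¹ p < r * (k + 1) + 1 :=
        fun p hp => ofPerm_lt τ⁻¹ hp
      have hwinj : ∀ x, x < r * (k + 1) + 1 → ∀ y, y < r * (k + 1) + 1 →
          ofPerm τ⁻¹ x = ofPerm τ⁻¹ y → x = y := fun x hx y hy => ofPerm_inj τ⁻¹ hx hy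
      have hub : ∀ x, x < r * (k + 1) + 1 → ofPerm τ x < r * (k + 1) + 1 :=
        fun x hx => ofPerm_lt τ hx
      have htop : ∀ l, 2 ≤ l → l ≤ r → ofPerm τ⁻¹ (r * k + l) = r * k + l :=
        top_forced hCτ hr hwb hwinj
      obtain ⟨c1, c2, c3⟩ := hCτ k (by omega)
      have h2top : ofPerm τ⁻¹ (r * k + 2) = r * k + 2 := htop 2 le_rfl hr
      have hv : ofPerm τ⁻¹ (r * k + 1) < r * k + 1 := by omega
      have hval_inv : ∀ y, y < r * (k + 1) + 1 → ofPerm τ⁻¹ (ofPerm τ y) = y :=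
        fun y hy => ofPerm_inv_ofPerm τ hy
      have hpos_val : ∀ p, p < r * (k + 1) + 1 → ofPerm τ (ofPerm τ⁻¹ p) = p :=
        fun p hp => ofPerm_ofPerm_inv τ hp
      have hkey : ∀ x, x ≤ r * k + 1 → x ≠ ofPerm τ⁻¹ (r * k + 1) → ofPerm τ x < r * k + 1 := by
        intro x hxn hxv
        have hxN : x < r * (k + 1) + 1 := by omega
        by_contra hge
        push_neg at hge
        have hlt := hub x hxN
        rcases Nat.eq_or_lt_of_le hge with he | hgt
        · have h4 := hval_inv x hxN
          rw [← he] at h4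
          exact hxv h4.symm
        · have hl : ofPerm τ x = r * k + (ofPerm τ x - r * k) := by omega
          have h3 := htop (ofPerm τ x - r * k) (by omega) (by omega)
          rw [← hl] at h3
          have h4 := hval_inv x hxN
          omega
      have huold : ∀ x : Fin (r * k + 1),
          (if x.1 < ofPerm τ⁻¹ (r * k + 1) then ofPerm τ x.1 else ofPerm τ (x.1 + 1)) < r * k + 1 := by
        intro x
        have hb := x.isLt
        split_ifs with h
        · exact hkey x.1 (by omega) (by omega)
        · exact hkey (x.1 + 1) (by omega) (by omega)
      set v0 := ofPerm τ⁻¹ (r * k + 1) with hv0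
      let π : Equiv.Perm (Fin (r * k + 1)) := Equiv.ofBijective
        (fun x : Fin (r * k + 1) =>
          (⟨if x.1 < v0 then ofPerm τ x.1 else ofPerm τ (x.1 + 1),
            huold x⟩ : Fin (r * k + 1)))
        (Finite.injective_iff_bijective.mp (by
          intro x y hxy
          have hbx := x.isLt
          have hby := y.isLt
          have h1 : (if x.1 < v0 then ofPerm τ x.1 else ofPerm τ (x.1 + 1))
              = (if y.1 < v0 then ofPerm τ y.1 else ofPerm τ (y.1 + 1)) :=
            congrArg Fin.val hxy
          apply Fin.ext
          split_ifs at h1 with ha hb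
          · exact ofPerm_inj τ (by omega) (by omega) h1
          · have := ofPerm_inj τ (by omega) (by omega) h1
            omega
          · have := ofPerm_inj τ (by omega) (by omega) h1
            omega
          · have := ofPerm_inj τ (by omega) (by omega) h1
            omega))
      have hofπ : ∀ x, x < r * k + 1 →
          ofPerm π x = if x < v0 then ofPerm τ x else ofPerm τ (x + 1) := by
        intro x hx
        unfold ofPerm
        rw [dif_pos hx]
        rfl
      have hins : insE (r * k + 1) (r * (k + 1) + 1) v0 hv hnN π = τ := by
        apply perm_ext_ofPerm
        intro x hx
        rw [ofPerm_insE hv hnN π hx]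
        rcases Nat.lt_trichotomy x v0 with h | h | h
        · rw [insW_lo h, hofπ x (by omega), if_pos h]
        · rw [h, insW_at]
          have h5 := hpos_val (r * k + 1) (by omega)
          rw [hv0, h5]
        · rcases Nat.lt_or_ge x (r * k + 2) with h2 | h2
          · rw [insW_mid h (by omega), hofπ (x - 1) (by omega), if_neg (by omega)]
            have e : x - 1 + 1 = x := by omega
            rw [e]
          · rw [insW_hi hv (by omega)]
            have hl : x = r * k + (x - r * k) := by omega
            have h3 := htop (x - r * k) (by omega) (by omega)
            rw [← hl] at h3
            have h4 := hpos_val x (by omega)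
            rw [h3] at h4
            exact h4.symm
      have hne_v : ∀ q, q < r * k + 1 → ofPerm τ⁻¹ q ≠ v0 := by
        intro q hq he
        have := hwinj q (by omega) (r * k + 1) (by omega) (by rw [he, hv0])
        omega
      have hwle : ∀ q, q < r * k + 1 → ofPerm τ⁻¹ q ≤ r * k + 1 := by
        intro q hq
        by_contra hgt
        push_neg at hgt
        have hwqN := hwb q (by omega)
        have hl : ofPerm τ⁻¹ q = r * k + (ofPerm τ⁻¹ q - r * k) := by omega
        have h3 := htop (ofPerm τ⁻¹ q - r * k) (by omega) (by omega)
        rw [← hl] at h3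
        have h5 := hwinj q (by omega) (ofPerm τ⁻¹ q) (by omega) h3.symm
        omega
      have hwold : ∀ q, q < r * k + 1 → ofPerm π⁻¹ q
          = if ofPerm τ⁻¹ q < v0 then ofPerm τ⁻¹ q else ofPerm τ⁻¹ q - 1 := by
        intro q hq
        have hwq := hwle q hq
        have hwqv := hne_v q hq
        by_cases hcase : ofPerm τ⁻¹ q < v0
        · rw [if_pos hcase]
          have h6 : ofPerm π (ofPerm τ⁻¹ q) = q := by
            rw [hofπ _ (by omega), if_pos hcase]
            exact hpos_val q (by omega)
          have h7 := ofPerm_inv_ofPerm π (show ofPerm τ⁻¹ q < r * k + 1 by omega)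
          rw [h6] at h7
          exact h7
        · rw [if_neg hcase]
          have h6 : ofPerm π (ofPerm τ⁻¹ q - 1) = q := by
            rw [hofπ _ (by omega), if_neg (by omega)]
            have e : ofPerm τ⁻¹ q - 1 + 1 = ofPerm τ⁻¹ q := by omega
            rw [e]
            exact hpos_val q (by omega)
          have h7 := ofPerm_inv_ofPerm π (show ofPerm τ⁻¹ q - 1 < r * k + 1 by omega)
          rw [h6] at h7
          exact h7
      have hCπ : IsCluster r k (ofPerm π⁻¹) := by
        intro j' hj'
        obtain ⟨d1, d2, d3⟩ := hCτ j' (by omega)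
        have hb : r * j' + r ≤ r * k := by
          have := Nat.mul_le_mul_left r (show j' + 1 ≤ k by omega)
          have e : r * (j' + 1) = r * j' + r := by ring
          omega
        have hmono : ∀ p1 p2, p1 < r * k + 1 → p2 < r * k + 1 →
            ofPerm τ⁻¹ p1 < ofPerm τ⁻¹ p2 → ofPerm π⁻¹ p1 < ofPerm π⁻¹ p2 := by
          intro p1 p2 hp1 hp2 hlt
          have h1 := hne_v p1 hp1
          have h2 := hne_v p2 hp2
          rw [hwold p1 hp1, hwold p2 hp2]
          split_ifs <;> omega
        exact ⟨hmono _ _ (by omega) (by omega) d1, hmono _ _ (by omega) (by omega) d2,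
          fun l h2 hl => hmono _ _ (by omega) (by omega) (d3 l h2 hl)⟩
      refine ⟨⟨π, v0⟩, ?_, ?_⟩
      · simp only [Finset.mem_filter, Finset.mem_product, Finset.mem_range, Finset.mem_univ,
          true_and]
        refine ⟨⟨hCπ, hv⟩, ?_⟩
        unfold insE0
        rw [dif_pos ⟨hv, hnN⟩, hins]
        exact ⟨hdes, hlpk⟩
      · unfold insE0
        rw [dif_pos ⟨hv, hnN⟩]
        exact hins
  -- Step C : fiberwise count, Step D : per-fiber evaluation, Step E : regroup by statistics
  have hprod : (((Finset.univ.filter (fun π : Equiv.Perm (Fin (r * k + 1)) =>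
              IsCluster r k (ofPerm π⁻¹))) ×ˢ Finset.range (r * k + 1)).filter
          (fun pv => desNum (r * (k + 1) + 1) (ofPerm (insE0 (r * k + 1) (r * (k + 1) + 1) pv.1 pv.2)) = i ∧
            lpkNum (r * (k + 1) + 1) (ofPerm ((insE0 (r * k + 1) (r * (k + 1) + 1) pv.1 pv.2))) = j)).card
      = ∑ π ∈ (Finset.univ.filter (fun π : Equiv.Perm (Fin (r * k + 1)) =>
              IsCluster r k (ofPerm π⁻¹))),
          ((Finset.range (r * k + 1)).filter (fun v =>
            desNum (r * (k + 1) + 1) (ofPerm (insE0 (r * k + 1) (r * (k + 1) + 1) π v)) = i ∧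
            lpkNum (r * (k + 1) + 1) (ofPerm (insE0 (r * k + 1) (r * (k + 1) + 1) π v)) = j)).card := by
    rw [Finset.card_filter, Finset.sum_product]
    apply Finset.sum_congr rfl
    intro p _
    rw [Finset.card_filter]
  have hfiber : ∀ π ∈ (Finset.univ.filter (fun π : Equiv.Perm (Fin (r * k + 1)) =>
        IsCluster r k (ofPerm π⁻¹))),
      ((Finset.range (r * k + 1)).filter (fun v =>
          desNum (r * (k + 1) + 1) (ofPerm (insE0 (r * k + 1) (r * (k + 1) + 1) π v)) = i ∧
          lpkNum (r * (k + 1) + 1) (ofPerm (insE0 (r * k + 1) (r * (k + 1) + 1) π v)) = j)).card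
        = cfun (r * k + 1) (desNum (r * k + 1) (ofPerm π)) (lpkNum (r * k + 1) (ofPerm π)) i j := by
    intro π hπ
    have hu : ∀ x, x < r * k + 1 → ofPerm π x < r * k + 1 := fun x hx => ofPerm_lt π hx
    have hstat : ∀ v ∈ Finset.range (r * k + 1),
        ((desNum (r * (k + 1) + 1) (ofPerm (insE0 (r * k + 1) (r * (k + 1) + 1) π v)) = i ∧
          lpkNum (r * (k + 1) + 1) (ofPerm (insE0 (r * k + 1) (r * (k + 1) + 1) π v)) = j)
        ↔ (((desSet (r * k + 1) (ofPerm π)).filter (fun x => x + 1 ≠ v)).card + 1 = i ∧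
           ((lpkSet (r * k + 1) (ofPerm π)).filter (fun x => x ≠ v ∧ x + 1 ≠ v)).card + 1 = j)) := by
      intro v hv
      rw [Finset.mem_range] at hv
      unfold insE0
      rw [dif_pos ⟨hv, hnN⟩]
      have hdes2 : desNum (r * (k + 1) + 1)
            (ofPerm (insE (r * k + 1) (r * (k + 1) + 1) v hv hnN π))
          = ((desSet (r * k + 1) (ofPerm π)).filter (fun x => x + 1 ≠ v)).card + 1 := by
        unfold desNum
        rw [show r * (k + 1) + 1 - 1 = r * k + 1 + r - 1 from by omega]
        have hset : (Finset.range (r * k + 1 + r - 1)).filter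
            (fun x => ofPerm (insE (r * k + 1) (r * (k + 1) + 1) v hv hnN π) (x + 1)
              < ofPerm (insE (r * k + 1) (r * (k + 1) + 1) v hv hnN π) x)
            = desSet (r * k + 1 + r) (insW (r * k + 1) v (ofPerm π)) := by
          unfold desSet
          rw [show r * k + 1 + r - 1 = r * k + 1 + r - 1 from rfl]
          apply Finset.filter_congr
          intro x hx
          rw [Finset.mem_range] at hx
          rw [ofPerm_insE hv hnN π (show x + 1 < r * (k + 1) + 1 by omega),
            ofPerm_insE hv hnN π (show x < r * (k + 1) + 1 by omega)]
        rw [hset, des_insW (r * k + 1) v r (ofPerm π) (by omega) hv hu,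
          card_insert_image_shift v 1 le_rfl]
      have hlpk2 : lpkNum (r * (k + 1) + 1)
            (ofPerm (insE (r * k + 1) (r * (k + 1) + 1) v hv hnN π))
          = ((lpkSet (r * k + 1) (ofPerm π)).filter (fun x => x ≠ v ∧ x + 1 ≠ v)).card + 1 := by
        unfold lpkNum
        rw [show r * (k + 1) + 1 - 1 = r * k + 1 + r - 1 from by omega]
        have hset : (Finset.range (r * k + 1 + r - 1)).filter
            (fun x => (1 ≤ x ∧ ofPerm (insE (r * k + 1) (r * (k + 1) + 1) v hv hnN π) (x - 1)
                < ofPerm (insE (r * k + 1) (r * (k + 1) + 1) v hv hnN π) x ∧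
                ofPerm (insE (r * k + 1) (r * (k + 1) + 1) v hv hnN π) (x + 1)
                < ofPerm (insE (r * k + 1) (r * (k + 1) + 1) v hv hnN π) x) ∨
              (x = 0 ∧ ofPerm (insE (r * k + 1) (r * (k + 1) + 1) v hv hnN π) 1
                < ofPerm (insE (r * k + 1) (r * (k + 1) + 1) v hv hnN π) 0))
            = lpkSet (r * k + 1 + r) (insW (r * k + 1) v (ofPerm π)) := by
          unfold lpkSet
          apply Finset.filter_congr
          intro x hx
          rw [Finset.mem_range] at hx
          rw [ofPerm_insE hv hnN π (show x + 1 < r * (k + 1) + 1 by omega),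
            ofPerm_insE hv hnN π (show x < r * (k + 1) + 1 by omega),
            ofPerm_insE hv hnN π (show x - 1 < r * (k + 1) + 1 by omega),
            ofPerm_insE hv hnN π (show (1 : ℕ) < r * (k + 1) + 1 by omega),
            ofPerm_insE hv hnN π (show (0 : ℕ) < r * (k + 1) + 1 by omega)]
        rw [hset, lpk_insW (r * k + 1) v r (ofPerm π) (by omega) hv hu,
          card_insert_image_shift v 1 le_rfl]
      rw [hdes2, hlpk2]
    rw [Finset.filter_congr hstat,
      abstract_count (r * k + 1) (lpkSet (r * k + 1) (ofPerm π)) (desSet (r * k + 1) (ofPerm π))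
        (lpkSet_subset_desSet _ _) (fun x hx => desSet_lt _ _ hx)
        (fun x hx => lpkSet_succ _ _ hx) (fun x hx y hy => lpkSet_des _ _ hx hy) i j,
      desNum_eq, lpkNum_eq]
  have hbound1 : ∀ π ∈ (Finset.univ.filter (fun π : Equiv.Perm (Fin (r * k + 1)) =>
      IsCluster r k (ofPerm π⁻¹))), desNum (r * k + 1) (ofPerm π) < r * k + 1 := by
    intro π _
    have h1 : desNum (r * k + 1) (ofPerm π) ≤ (Finset.range (r * k + 1 - 1)).card :=
      Finset.card_filter_le _ _
    rw [Finset.card_range] at h1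
    omega
  have hbound2 : ∀ π ∈ (Finset.univ.filter (fun π : Equiv.Perm (Fin (r * k + 1)) =>
      IsCluster r k (ofPerm π⁻¹))), lpkNum (r * k + 1) (ofPerm π) < r * k + 1 := by
    intro π _
    have h1 : lpkNum (r * k + 1) (ofPerm π) ≤ (Finset.range (r * k + 1 - 1)).card :=
      Finset.card_filter_le _ _
    rw [Finset.card_range] at h1
    omega
  have hsum := sum_stats
      (Finset.univ.filter (fun π : Equiv.Perm (Fin (r * k + 1)) => IsCluster r k (ofPerm π⁻¹)))
      (fun π => desNum (r * k + 1) (ofPerm π)) (fun π => lpkNum (r * k + 1) (ofPerm π))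
      (r * k + 1) hbound1 hbound2 (fun a b => cfun (r * k + 1) a b i j)
  rw [hT, hbij, hprod, Finset.sum_congr rfl hfiber, hsum]
  unfold ptnum clusterSet
  rfl

/-! #### Stirling side: words -/

lemma ofWord_lt {n k : ℕ} (ρ : Fin n → Fin k) {x : ℕ} (hx : x < n) :
    ofWord ρ x < k + 1 := by
  unfold ofWord
  rw [dif_pos hx]
  have := (ρ ⟨x, hx⟩).isLt
  omega

lemma ofWord_pos {n k : ℕ} (ρ : Fin n → Fin k) {x : ℕ} (hx : x < n) :
    1 ≤ ofWord ρ x := by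
  unfold ofWord
  rw [dif_pos hx]
  omega

lemma ofWord_ext {n k : ℕ} (ρ ρ' : Fin n → Fin k)
    (h : ∀ x, x < n → ofWord ρ x = ofWord ρ' x) : ρ = ρ' := by
  funext x
  apply Fin.ext
  have := h x.1 x.isLt
  unfold ofWord at this
  rw [dif_pos x.isLt, dif_pos x.isLt] at this
  simp only [Fin.eta] at this
  omega

def lplatSet (n : ℕ) (w : ℕ → ℕ) : Finset ℕ :=
  (Finset.range (n - 1)).filter (fun x => w x = w (x + 1) ∧ ∀ j < x, w j ≠ w x)

def lascSet (n : ℕ) (w : ℕ → ℕ) : Finset ℕ :=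
  (Finset.range (n - 1)).filter
    (fun x => (1 ≤ x ∧ w (x - 1) < w x ∧ w x = w (x + 1)) ∨ (x = 0 ∧ w 0 = w 1))

lemma lplatNum_eq (n : ℕ) (w : ℕ → ℕ) : lplatNum n w = (lplatSet n w).card := rfl

lemma lascplatNum_eq (n : ℕ) (w : ℕ → ℕ) : lascplatNum n w = (lascSet n w).card := rfl

lemma lplatSet_congr (n : ℕ) (w w' : ℕ → ℕ) (h : ∀ x, x < n → w x = w' x) :
    lplatSet n w = lplatSet n w' := by
  ext x
  simp only [lplatSet, Finset.mem_filter, Finset.mem_range]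
  constructor
  · rintro ⟨hx, h1, h2⟩
    refine ⟨hx, ?_, ?_⟩
    · rw [← h x (by omega), ← h (x + 1) (by omega)]
      exact h1
    · intro j hj
      rw [← h j (by omega), ← h x (by omega)]
      exact h2 j hj
  · rintro ⟨hx, h1, h2⟩
    refine ⟨hx, ?_, ?_⟩
    · rw [h x (by omega), h (x + 1) (by omega)]
      exact h1
    · intro j hj
      rw [h j (by omega), h x (by omega)]
      exact h2 j hj

lemma lascSet_congr (n : ℕ) (w w' : ℕ → ℕ) (h : ∀ x, x < n → w x = w' x) :
    lascSet n w = lascSet n w' := by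
  ext x
  simp only [lascSet, Finset.mem_filter, Finset.mem_range]
  constructor
  · rintro ⟨hx, ⟨h1, h2, h3⟩ | ⟨h0, h1⟩⟩
    · refine ⟨hx, Or.inl ⟨h1, ?_, ?_⟩⟩
      · rw [← h (x - 1) (by omega), ← h x (by omega)]
        exact h2
      · rw [← h x (by omega), ← h (x + 1) (by omega)]
        exact h3
    · subst h0
      refine ⟨hx, Or.inr ⟨rfl, ?_⟩⟩
      rw [← h 0 (by omega), ← h 1 (by omega)]
      exact h1
  · rintro ⟨hx, ⟨h1, h2, h3⟩ | ⟨h0, h1⟩⟩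
    · refine ⟨hx, Or.inl ⟨h1, ?_, ?_⟩⟩
      · rw [h (x - 1) (by omega), h x (by omega)]
        exact h2
      · rw [h x (by omega), h (x + 1) (by omega)]
        exact h3
    · subst h0
      refine ⟨hx, Or.inr ⟨rfl, ?_⟩⟩
      rw [h 0 (by omega), h 1 (by omega)]
      exact h1

lemma lascSet_succ (n : ℕ) (w : ℕ → ℕ) {x : ℕ} (hx : x ∈ lascSet n w) :
    x + 1 ∉ lascSet n w := by
  simp only [lascSet, Finset.mem_filter, Finset.mem_range] at *
  rintro ⟨-, ⟨-, h1, -⟩ | ⟨h, -⟩⟩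
  · simp only [Nat.add_sub_cancel] at h1
    rcases hx.2 with ⟨-, -, h2⟩ | ⟨h0, h2⟩
    · omega
    · subst h0
      simp only [Nat.zero_add] at h1
      omega
  · omega

lemma lascSet_lplat (n : ℕ) (w : ℕ → ℕ) {x y : ℕ} (hx : x ∈ lascSet n w)
    (hy : y ∈ lplatSet n w) : y + 1 ≠ x := by
  simp only [lascSet, lplatSet, Finset.mem_filter, Finset.mem_range] at *
  rintro rfl
  rcases hx.2 with ⟨-, h1, -⟩ | ⟨h0, -⟩
  · simp only [Nat.add_sub_cancel] at h1
    have := hy.2.1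
    omega
  · omega

lemma lascSet_subset_lplatSet (m : ℕ) (w : ℕ → ℕ)
    (hST : ∀ i l j, i < l → l < j → j < m → w i = w j → w i ≤ w l) :
    lascSet m w ⊆ lplatSet m w := by
  intro x hx
  simp only [lascSet, lplatSet, Finset.mem_filter, Finset.mem_range] at *
  refine ⟨hx.1, ?_, ?_⟩
  · rcases hx.2 with ⟨-, -, h⟩ | ⟨h0, h⟩
    · exact h
    · subst h0
      exact h
  · intro j hj he
    rcases hx.2 with ⟨h1, h2, h3⟩ | ⟨h0, h3⟩
    · rcases Nat.eq_or_lt_of_le (show j ≤ x - 1 by omega) with hj1 | hj1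
      · rw [hj1] at he
        omega
      · have h4 := hST j (x - 1) (x + 1) (by omega) (by omega) (by omega) (by rw [he, h3])
        omega
    · subst h0
      omega

def insSW (g r top : ℕ) (ww : ℕ → ℕ) : ℕ → ℕ := fun x =>
  if x < g then ww x else if x < g + r then top else ww (x - r)

lemma insSW_lo {g r top x : ℕ} {ww : ℕ → ℕ} (h : x < g) : insSW g r top ww x = ww x :=
  if_pos h

lemma insSW_blk {g r top x : ℕ} {ww : ℕ → ℕ} (h1 : g ≤ x) (h2 : x < g + r) :
    insSW g r top ww x = top := by
  unfold insSW
  rw [if_neg (by omega), if_pos h2]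

lemma insSW_hi {g r top x : ℕ} {ww : ℕ → ℕ} (h : g + r ≤ x) :
    insSW g r top ww x = ww (x - r) := by
  unfold insSW
  rw [if_neg (by omega), if_neg (by omega)]

lemma lplat_insSW (m g r top : ℕ) (ww : ℕ → ℕ) (hg : g ≤ m) (hr : 2 ≤ r)
    (htop : ∀ x, x < m → ww x < top) :
    lplatSet (m + r) (insSW g r top ww)
      = insert g (((lplatSet m ww).filter (fun x => x + 1 ≠ g)).image (shiftIns g r)) := by
  ext x
  simp only [lplatSet, Finset.mem_insert, Finset.mem_image, Finset.mem_filter, Finset.mem_range]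
  constructor
  · rintro ⟨hxr, hplat, hlead⟩
    rcases Nat.lt_trichotomy x g with hx | hx | hx
    · rcases Nat.lt_or_ge (x + 1) g with hx1 | hx1
      · right
        refine ⟨x, ⟨⟨by omega, ?_, ?_⟩, by omega⟩, if_pos hx⟩
        · rwa [insSW_lo hx, insSW_lo hx1] at hplat
        · intro j hj
          have := hlead j hj
          rwa [insSW_lo (by omega), insSW_lo hx] at this
      · exfalso
        have hx2 : x + 1 = g := by omega
        rw [insSW_lo hx, hx2, insSW_blk le_rfl (by omega)] at hplat
        have := htop x (by omega)
        omega
    · left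
      omega
    · rcases Nat.lt_or_ge x (g + r) with hxb | hxb
      · exfalso
        rcases Nat.lt_or_ge x (g + r - 1) with hxc | hxc
        · have := hlead g hx
          rw [insSW_blk le_rfl (by omega), insSW_blk (by omega) (by omega)] at this
          exact this rfl
        · rw [insSW_blk (by omega) (by omega), insSW_hi (by omega)] at hplat
          have := htop (x + 1 - r) (by omega)
          omega
      · right
        refine ⟨x - r, ⟨⟨by omega, ?_, ?_⟩, by omega⟩, ?_⟩
        · rw [insSW_hi hxb, insSW_hi (by omega)] at hplat
          have e : x + 1 - r = x - r + 1 := by omega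
          rwa [e] at hplat
        · intro j hj
          rcases Nat.lt_or_ge j g with hjg | hjg
          · have := hlead j (by omega)
            rwa [insSW_lo hjg, insSW_hi hxb] at this
          · have := hlead (j + r) (by omega)
            rw [insSW_hi (by omega), insSW_hi hxb] at this
            have e : j + r - r = j := by omega
            rwa [e] at this
        · unfold shiftIns
          rw [if_neg (by omega)]
          omega
  · rintro (hxg | ⟨y, ⟨⟨hy, hplat, hlead⟩, hyg⟩, hsh⟩)
    · rw [hxg]
      refine ⟨by omega, ?_, ?_⟩
      · rw [insSW_blk le_rfl (by omega), insSW_blk (by omega) (by omega)]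
      · intro j hj
        rw [insSW_lo hj, insSW_blk le_rfl (by omega)]
        have := htop j (by omega)
        omega
    · rw [← hsh]
      unfold shiftIns
      split_ifs with h
      · refine ⟨by omega, ?_, ?_⟩
        · rw [insSW_lo h, insSW_lo (by omega)]
          exact hplat
        · intro j hj
          rw [insSW_lo (by omega), insSW_lo h]
          exact hlead j hj
      · refine ⟨by omega, ?_, ?_⟩
        · rw [insSW_hi (by omega), insSW_hi (by omega)]
          have e1 : y + r - r = y := by omega
          have e2 : y + r + 1 - r = y + 1 := by omega
          rw [e1, e2]
          exact hplat
        · intro j hj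
          rcases Nat.lt_or_ge j g with hjg | hjg
          · rw [insSW_lo hjg, insSW_hi (by omega)]
            have e1 : y + r - r = y := by omega
            rw [e1]
            exact hlead j (by omega)
          · rcases Nat.lt_or_ge j (g + r) with hjb | hjb
            · rw [insSW_blk hjg hjb, insSW_hi (by omega)]
              have e1 : y + r - r = y := by omega
              rw [e1]
              have := htop y (by omega)
              omega
            · rw [insSW_hi hjb, insSW_hi (by omega)]
              have e1 : y + r - r = y := by omega
              rw [e1]
              exact hlead (j - r) (by omega)

lemma lasc_insSW (m g r top : ℕ) (ww : ℕ → ℕ) (hg : g ≤ m) (hr : 2 ≤ r)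
    (htop : ∀ x, x < m → ww x < top) :
    lascSet (m + r) (insSW g r top ww)
      = insert g (((lascSet m ww).filter (fun x => x ≠ g ∧ x + 1 ≠ g)).image (shiftIns g r)) := by
  ext x
  simp only [lascSet, Finset.mem_insert, Finset.mem_image, Finset.mem_filter, Finset.mem_range]
  constructor
  · rintro ⟨hxr, hp⟩
    rcases Nat.lt_trichotomy x g with hx | hx | hx
    · rcases Nat.lt_or_ge (x + 1) g with hx1 | hx1
      · right
        refine ⟨x, ⟨⟨by omega, ?_⟩, by omega, by omega⟩, if_pos hx⟩
        rcases hp with ⟨h1, h2, h3⟩ | ⟨h0, h01⟩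
        · rw [insSW_lo (show x - 1 < g by omega), insSW_lo hx] at h2
          rw [insSW_lo hx, insSW_lo hx1] at h3
          exact Or.inl ⟨h1, h2, h3⟩
        · rw [insSW_lo (show (0 : ℕ) < g by omega), insSW_lo (show (1 : ℕ) < g by omega)] at h01
          exact Or.inr ⟨h0, h01⟩
      · exfalso
        have hx2 : x + 1 = g := by omega
        rcases hp with ⟨h1, h2, h3⟩ | ⟨h0, h01⟩
        · rw [insSW_lo hx, hx2, insSW_blk le_rfl (by omega)] at h3
          have := htop x (by omega)
          omega
        · rw [insSW_lo (show (0 : ℕ) < g by omega),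
            insSW_blk (show g ≤ 1 by omega) (show 1 < g + r by omega)] at h01
          have := htop 0 (by omega)
          omega
    · left
      omega
    · rcases Nat.lt_or_ge x (g + r) with hxb | hxb
      · exfalso
        rcases hp with ⟨h1, h2, h3⟩ | ⟨h0, h01⟩
        · rcases Nat.lt_or_ge x (g + r - 1) with hxc | hxc
          · rw [insSW_blk (by omega) (by omega), insSW_blk (by omega) (by omega)] at h2
            omega
          · rw [insSW_blk (by omega) (by omega), insSW_hi (by omega)] at h3
            have := htop (x + 1 - r) (by omega)
            omega
        · omega
      · rcases hp with ⟨h1, h2, h3⟩ | ⟨h0, h01⟩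
        swap
        · exfalso
          omega
        rcases Nat.eq_or_lt_of_le hxb with hxe | hxg2
        · exfalso
          rw [insSW_blk (by omega) (by omega), insSW_hi (by omega)] at h2
          have := htop (x - r) (by omega)
          omega
        · right
          refine ⟨x - r, ⟨⟨by omega, ?_⟩, by omega, by omega⟩, ?_⟩
          · left
            rw [insSW_hi (show g + r ≤ x - 1 by omega), insSW_hi (by omega)] at h2
            rw [insSW_hi (by omega), insSW_hi (show g + r ≤ x + 1 by omega)] at h3
            refine ⟨by omega, ?_, ?_⟩
            · have e1 : x - 1 - r = x - r - 1 := by omega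
              rwa [e1] at h2
            · have e2 : x + 1 - r = x - r + 1 := by omega
              rwa [e2] at h3
          · unfold shiftIns
            rw [if_neg (by omega)]
            omega
  · rintro (hxg | ⟨y, ⟨⟨hy, hp⟩, hyg, hyg1⟩, hsh⟩)
    · rw [hxg]
      refine ⟨by omega, ?_⟩
      by_cases hg0 : g = 0
      · right
        refine ⟨hg0, ?_⟩
        rw [insSW_blk (by omega) (by omega), insSW_blk (by omega) (by omega)]
      · left
        refine ⟨by omega, ?_, ?_⟩
        · rw [insSW_lo (show g - 1 < g by omega), insSW_blk le_rfl (by omega)]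
          have := htop (g - 1) (by omega)
          omega
        · rw [insSW_blk le_rfl (by omega), insSW_blk (by omega) (by omega)]
    · rw [← hsh]
      unfold shiftIns
      split_ifs with h
      · refine ⟨by omega, ?_⟩
        rcases hp with ⟨h1, h2, h3⟩ | ⟨h0, h01⟩
        · left
          rw [insSW_lo (show y - 1 < g by omega), insSW_lo h, insSW_lo (show y + 1 < g by omega)]
          exact ⟨h1, h2, h3⟩
        · right
          refine ⟨h0, ?_⟩
          rw [insSW_lo (show (0 : ℕ) < g by omega), insSW_lo (show (1 : ℕ) < g by omega)]
          exact h01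
      · refine ⟨by omega, ?_⟩
        rcases hp with ⟨h1, h2, h3⟩ | ⟨h0, h01⟩
        · left
          refine ⟨by omega, ?_, ?_⟩
          · rw [insSW_hi (show g + r ≤ y + r - 1 by omega), insSW_hi (show g + r ≤ y + r by omega)]
            have e1 : y + r - 1 - r = y - 1 := by omega
            have e2 : y + r - r = y := by omega
            rw [e1, e2]
            exact h2
          · rw [insSW_hi (show g + r ≤ y + r by omega), insSW_hi (show g + r ≤ y + r + 1 by omega)]
            have e2 : y + r - r = y := by omega
            have e3 : y + r + 1 - r = y + 1 := by omega
            rw [e2, e3]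
            exact h3
        · exfalso
          omega

/-! #### Stirling side: the insertion map on functions -/

def insS (r k : ℕ) (σ : Fin (r * k) → Fin k) (g : ℕ) : Fin (r * (k + 1)) → Fin (k + 1) :=
  fun p =>
    if _h1 : (p : ℕ) < g then
      (if h2 : (p : ℕ) < r * k then (σ ⟨p, h2⟩).castSucc else Fin.last k)
    else if _h2 : (p : ℕ) < g + r then Fin.last k
    else (σ ⟨(p : ℕ) - r, by
      have hb := p.isLt
      have hmul : r * (k + 1) = r * k + r := by ring
      omega⟩).castSucc

lemma ofWord_insS {r k : ℕ} (σ : Fin (r * k) → Fin k) (g : ℕ) (hg : g ≤ r * k)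
    {x : ℕ} (hx : x < r * k + r) :
    ofWord (insS r k σ g) x = insSW g r (k + 1) (ofWord σ) x := by
  have hmul : r * (k + 1) = r * k + r := by ring
  have hxlt : x < r * (k + 1) := by omega
  have hofW : ∀ y (hy : y < r * k), ofWord σ y = ((σ ⟨y, hy⟩ : Fin k) : ℕ) + 1 := by
    intro y hy
    unfold ofWord
    rw [dif_pos hy]
  have hL : ofWord (insS r k σ g) x = ((insS r k σ g ⟨x, hxlt⟩ : Fin (k + 1)) : ℕ) + 1 := by
    unfold ofWord
    rw [dif_pos hxlt]
  rw [hL]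
  by_cases h1 : x < g
  · rw [insSW_lo h1, hofW x (show x < r * k by omega)]
    have hbody : insS r k σ g ⟨x, hxlt⟩ = (σ ⟨x, show x < r * k by omega⟩).castSucc := by
      unfold insS
      rw [dif_pos (show ((⟨x, hxlt⟩ : Fin (r * (k + 1))) : ℕ) < g from h1),
        dif_pos (show ((⟨x, hxlt⟩ : Fin (r * (k + 1))) : ℕ) < r * k from (by omega : x < r * k))]
    rw [hbody]
    rfl
  · by_cases h2 : x < g + r
    · rw [insSW_blk (by omega) h2]
      have hbody : insS r k σ g ⟨x, hxlt⟩ = Fin.last k := by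
        unfold insS
        rw [dif_neg (show ¬ ((⟨x, hxlt⟩ : Fin (r * (k + 1))) : ℕ) < g from h1),
          dif_pos (show ((⟨x, hxlt⟩ : Fin (r * (k + 1))) : ℕ) < g + r from h2)]
      rw [hbody]
      rfl
    · rw [insSW_hi (by omega), hofW (x - r) (show x - r < r * k by omega)]
      have hbody : insS r k σ g ⟨x, hxlt⟩ = (σ ⟨x - r, show x - r < r * k by omega⟩).castSucc := by
        unfold insS
        rw [dif_neg (show ¬ ((⟨x, hxlt⟩ : Fin (r * (k + 1))) : ℕ) < g from h1),
          dif_neg (show ¬ ((⟨x, hxlt⟩ : Fin (r * (k + 1))) : ℕ) < g + r from h2)]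
      rw [hbody]
      rfl

lemma mem_stirling_iff {r k : ℕ} (σ : Fin (r * k) → Fin k) :
    σ ∈ stirlingSet r k
      ↔ ((∀ a, 1 ≤ a → a ≤ k → ((Finset.range (r * k)).filter
            (fun x => ofWord σ x = a)).card = r) ∧
         (∀ i l j, i < l → l < j → j < r * k → ofWord σ i = ofWord σ j →
            ofWord σ i ≤ ofWord σ l)) := by
  have hval : ∀ x : Fin (r * k), ofWord σ x.1 = (σ x).1 + 1 := by
    intro x
    unfold ofWord
    rw [dif_pos x.isLt]
  have hbridge : ∀ a : Fin k, (Finset.univ.filter (fun i : Fin (r * k) => σ i = a)).card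
      = ((Finset.range (r * k)).filter (fun x => ofWord σ x = (a : ℕ) + 1)).card := by
    intro a
    apply Finset.card_bij (fun (i : Fin (r * k)) (_ : i ∈ Finset.univ.filter (fun i => σ i = a)) => (i : ℕ))
    · intro i hi
      simp only [Finset.mem_filter, Finset.mem_univ, true_and] at hi
      simp only [Finset.mem_filter, Finset.mem_range]
      refine ⟨i.isLt, ?_⟩
      rw [hval i, hi]
    · intro x _ y _ hxy
      exact Fin.ext hxy
    · intro x hx
      simp only [Finset.mem_filter, Finset.mem_range] at hx
      refine ⟨⟨x, hx.1⟩, ?_, rfl⟩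
      simp only [Finset.mem_filter, Finset.mem_univ, true_and]
      have h2 := hval ⟨x, hx.1⟩
      apply Fin.ext
      have := hx.2
      simp only at h2
      omega
  unfold stirlingSet
  simp only [Finset.mem_filter, Finset.mem_univ, true_and]
  constructor
  · rintro ⟨hcnt, hcond⟩
    constructor
    · intro a ha1 hak
      have h1 := hcnt ⟨a - 1, by omega⟩
      rw [hbridge ⟨a - 1, by omega⟩] at h1
      rw [show ((⟨a - 1, by omega⟩ : Fin k) : ℕ) = a - 1 from rfl] at h1
      rw [show a - 1 + 1 = a from by omega] at h1
      exact h1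
    · intro i l j hil hlj hjm he
      have hi : i < r * k := by omega
      have hl : l < r * k := by omega
      have hvi := hval ⟨i, hi⟩
      have hvl := hval ⟨l, hl⟩
      have hvj := hval ⟨j, hjm⟩
      simp only at hvi hvl hvj
      have heq : σ ⟨i, hi⟩ = σ ⟨j, hjm⟩ := by
        apply Fin.ext
        omega
      have h1 := hcond ⟨i, hi⟩ ⟨l, hl⟩ ⟨j, hjm⟩ (by simp [Fin.lt_def]; omega)
        (by simp [Fin.lt_def]; omega) heq
      rw [Fin.le_def] at h1
      omega
  · rintro ⟨hcnt, hcond⟩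
    constructor
    · intro a
      rw [hbridge a]
      exact hcnt ((a : ℕ) + 1) (by omega) (by have := a.isLt; omega)
    · intro i l j hil hlj he
      have hvi := hval i
      have hvl := hval l
      have hvj := hval j
      have h1 := hcond i.1 l.1 j.1 (by rw [Fin.lt_def] at hil; omega)
        (by rw [Fin.lt_def] at hlj; omega) j.isLt (by rw [hvi, hvj, he])
      rw [Fin.le_def]
      omega

lemma insS_mem {r k : ℕ} (σ : Fin (r * k) → Fin k) (g : ℕ) (hσ : σ ∈ stirlingSet r k)
    (hg : g ≤ r * k) (hr : 2 ≤ r) : insS r k σ g ∈ stirlingSet r (k + 1) := by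
  have hmul : r * (k + 1) = r * k + r := by ring
  obtain ⟨hcnt, hcond⟩ := (mem_stirling_iff σ).mp hσ
  have htop : ∀ x, x < r * k → ofWord σ x < k + 1 := fun x hx => ofWord_lt σ hx
  apply (mem_stirling_iff (insS r k σ g)).mpr
  constructor
  · intro a ha1 hak
    have hflt : (Finset.range (r * (k + 1))).filter (fun x => ofWord (insS r k σ g) x = a)
        = (Finset.range (r * k + r)).filter (fun x => insSW g r (k + 1) (ofWord σ) x = a) := by
      ext x
      simp only [Finset.mem_filter, Finset.mem_range]
      constructor
      · rintro ⟨hxr, hxa⟩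
        exact ⟨by omega, by rw [← ofWord_insS σ g hg (by omega)]; exact hxa⟩
      · rintro ⟨hxr, hxa⟩
        exact ⟨by omega, by rw [ofWord_insS σ g hg (by omega)]; exact hxa⟩
    rw [hflt]
    rcases Nat.eq_or_lt_of_le hak with hae | hal
    · have hset : (Finset.range (r * k + r)).filter (fun x => insSW g r (k + 1) (ofWord σ) x = a)
          = Finset.Ico g (g + r) := by
        ext x
        simp only [Finset.mem_filter, Finset.mem_range, Finset.mem_Ico]
        constructor
        · rintro ⟨hxr, hxa⟩
          by_contra hc
          rcases Nat.lt_or_ge x g with h1 | h1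
          · rw [insSW_lo h1] at hxa
            have := htop x (by omega)
            omega
          · have h2 : g + r ≤ x := by omega
            rw [insSW_hi h2] at hxa
            have := htop (x - r) (by omega)
            omega
        · rintro ⟨h1, h2⟩
          refine ⟨by omega, ?_⟩
          rw [insSW_blk h1 h2]
          omega
      rw [hset, Nat.card_Ico]
      omega
    · have hset : (Finset.range (r * k + r)).filter (fun x => insSW g r (k + 1) (ofWord σ) x = a)
          = ((Finset.range (r * k)).filter (fun x => ofWord σ x = a)).image (shiftIns g r) := by
        ext x
        simp only [Finset.mem_filter, Finset.mem_range, Finset.mem_image]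
        constructor
        · rintro ⟨hxr, hxa⟩
          rcases Nat.lt_or_ge x g with h1 | h1
          · rw [insSW_lo h1] at hxa
            exact ⟨x, ⟨by omega, hxa⟩, if_pos h1⟩
          · rcases Nat.lt_or_ge x (g + r) with h2 | h2
            · rw [insSW_blk h1 h2] at hxa
              omega
            · rw [insSW_hi h2] at hxa
              refine ⟨x - r, ⟨by omega, hxa⟩, ?_⟩
              unfold shiftIns
              rw [if_neg (by omega)]
              omega
        · rintro ⟨y, ⟨hy, hya⟩, hsh⟩
          rw [← hsh]
          unfold shiftIns
          split_ifs with h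
          · exact ⟨by omega, by rw [insSW_lo h]; exact hya⟩
          · refine ⟨by omega, ?_⟩
            rw [insSW_hi (by omega)]
            have e : y + r - r = y := by omega
            rw [e]
            exact hya
      rw [hset, Finset.card_image_of_injective _ (shiftIns_injective g r)]
      exact hcnt a ha1 (by omega)
  · intro i l j hil hlj hjm he
    rw [ofWord_insS σ g hg (by omega), ofWord_insS σ g hg (by omega)] at he
    rw [ofWord_insS σ g hg (by omega), ofWord_insS σ g hg (by omega)]
    by_cases hib : g ≤ i ∧ i < g + r
    · have hiv : insSW g r (k + 1) (ofWord σ) i = k + 1 := insSW_blk hib.1 hib.2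
      have hjb : j < g + r := by
        by_contra hc
        push_neg at hc
        rw [hiv, insSW_hi hc] at he
        have := htop (j - r) (by omega)
        omega
      rw [hiv, insSW_blk (by omega) (by omega)]
    · have hnb : ∀ x, ¬(g ≤ x ∧ x < g + r) → x < r * k + r →
          insSW g r (k + 1) (ofWord σ) x = ofWord σ (if x < g then x else x - r) := by
        intro x hx hxr
        by_cases h : x < g
        · rw [insSW_lo h, if_pos h]
        · rw [insSW_hi (by omega), if_neg h]
      have hiv := hnb i hib (by omega)
      have hjnb : ¬(g ≤ j ∧ j < g + r) := by
        intro hjb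
        rw [hiv, insSW_blk hjb.1 hjb.2] at he
        have hlt := htop (if i < g then i else i - r) (by split_ifs <;> omega)
        omega
      have hjv := hnb j hjnb (by omega)
      by_cases hlb : g ≤ l ∧ l < g + r
      · rw [hiv, insSW_blk hlb.1 hlb.2]
        have hlt := htop (if i < g then i else i - r) (by split_ifs <;> omega)
        omega
      · have hlv := hnb l hlb (by omega)
        rw [hiv, hlv]
        rw [hiv, hjv] at he
        refine hcond (if i < g then i else i - r) (if l < g then l else l - r)
          (if j < g then j else j - r) ?_ ?_ ?_ he
        · split_ifs <;> omega
        · split_ifs <;> omega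
        · split_ifs <;> omega

lemma insS_inj {r k : ℕ} {σ σ' : Fin (r * k) → Fin k} {g g' : ℕ}
    (hg : g ≤ r * k) (hg' : g' ≤ r * k) (hr : 2 ≤ r)
    (h : insS r k σ g = insS r k σ' g') : g = g' ∧ σ = σ' := by
  have hmul : r * (k + 1) = r * k + r := by ring
  have hww : ∀ x, x < r * k + r →
      insSW g r (k + 1) (ofWord σ) x = insSW g' r (k + 1) (ofWord σ') x := by
    intro x hx
    rw [← ofWord_insS σ g hg hx, ← ofWord_insS σ' g' hg' hx, h]
  have hgg : g = g' := by
    by_contra hne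
    rcases Nat.lt_or_ge g g' with hlt | hge
    · have h1 := hww g (by omega)
      rw [insSW_blk le_rfl (by omega), insSW_lo hlt] at h1
      have := ofWord_lt σ' (show g < r * k by omega)
      omega
    · have hlt : g' < g := by omega
      have h1 := hww g' (by omega)
      rw [insSW_lo hlt, insSW_blk le_rfl (by omega)] at h1
      have := ofWord_lt σ (show g' < r * k by omega)
      omega
  subst hgg
  refine ⟨rfl, ?_⟩
  apply ofWord_ext
  intro x hx
  rcases Nat.lt_or_ge x g with h1 | h1
  · have h2 := hww x (by omega)
    rwa [insSW_lo h1, insSW_lo h1] at h2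
  · have h2 := hww (x + r) (by omega)
    rw [insSW_hi (by omega), insSW_hi (by omega)] at h2
    have e : x + r - r = x := by omega
    rwa [e] at h2

lemma insS_surj {r k : ℕ} (ρ : Fin (r * (k + 1)) → Fin (k + 1))
    (hρ : ρ ∈ stirlingSet r (k + 1)) (hr : 2 ≤ r) :
    ∃ σ g, σ ∈ stirlingSet r k ∧ g ≤ r * k ∧ insS r k σ g = ρ := by
  have hmul : r * (k + 1) = r * k + r := by ring
  obtain ⟨hcnt, hcond⟩ := (mem_stirling_iff ρ).mp hρ
  set B := (Finset.range (r * (k + 1))).filter (fun x => ofWord ρ x = k + 1) with hB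
  have hBcard : B.card = r := hcnt (k + 1) (by omega) le_rfl
  have hBne : B.Nonempty := by
    rw [← Finset.card_pos, hBcard]
    omega
  set g := B.min' hBne with hgdef
  set M := B.max' hBne with hMdef
  have hgB : g ∈ B := B.min'_mem hBne
  have hMB : M ∈ B := B.max'_mem hBne
  have hgB2 : g < r * (k + 1) ∧ ofWord ρ g = k + 1 := by
    have := hgB
    simp only [hB, Finset.mem_filter, Finset.mem_range] at this
    exact this
  have hMB2 : M < r * (k + 1) ∧ ofWord ρ M = k + 1 := by
    have := hMB
    simp only [hB, Finset.mem_filter, Finset.mem_range] at this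
    exact this
  have hIcc : ∀ x, g ≤ x → x ≤ M → x ∈ B := by
    intro x h1 h2
    rcases Nat.eq_or_lt_of_le h1 with he | h1'
    · rwa [← he]
    · rcases Nat.eq_or_lt_of_le h2 with he2 | h2'
      · rwa [he2]
      · have hle := hcond g x M h1' h2' hMB2.1 (by rw [hgB2.2, hMB2.2])
        have hxb : ofWord ρ x < k + 1 + 1 := ofWord_lt ρ (by omega)
        simp only [hB, Finset.mem_filter, Finset.mem_range]
        constructor
        · omega
        · omega
  have hBI : B = Finset.Icc g M := by
    apply Finset.Subset.antisymm
    · intro x hx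
      exact Finset.mem_Icc.mpr ⟨B.min'_le x hx, B.le_max' x hx⟩
    · intro x hx
      rw [Finset.mem_Icc] at hx
      exact hIcc x hx.1 hx.2
  have hgM : g ≤ M := B.min'_le M hMB
  have hM : M = g + r - 1 := by
    have hc := hBcard
    rw [hBI, Nat.card_Icc] at hc
    omega
  have hgbound : g + r ≤ r * (k + 1) := by omega
  have hg2 : g ≤ r * k := by omega
  have hchar : ∀ x, x < r * (k + 1) → (ofWord ρ x = k + 1 ↔ (g ≤ x ∧ x < g + r)) := by
    intro x hx
    constructor
    · intro hxv
      have hxB : x ∈ B := by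
        simp only [hB, Finset.mem_filter, Finset.mem_range]
        exact ⟨hx, hxv⟩
      rw [hBI, Finset.mem_Icc] at hxB
      omega
    · intro hxr
      have hxB : x ∈ B := by
        rw [hBI, Finset.mem_Icc]
        omega
      simp only [hB, Finset.mem_filter] at hxB
      exact hxB.2
  have hval : ∀ q : Fin (r * k),
      (ofWord ρ (if (q : ℕ) < g then (q : ℕ) else (q : ℕ) + r)) - 1 < k := by
    intro q
    have hq := q.isLt
    have hxlt : (if (q : ℕ) < g then (q : ℕ) else (q : ℕ) + r) < r * (k + 1) := by
      split_ifs <;> omega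
    have h1 := ofWord_lt ρ hxlt
    have h2 : ofWord ρ (if (q : ℕ) < g then (q : ℕ) else (q : ℕ) + r) ≠ k + 1 := by
      intro hc
      have := (hchar _ hxlt).mp hc
      split_ifs at this <;> omega
    have h3 : 1 ≤ ofWord ρ (if (q : ℕ) < g then (q : ℕ) else (q : ℕ) + r) := ofWord_pos ρ hxlt
    omega
  set σ : Fin (r * k) → Fin k := fun q => ⟨_, hval q⟩ with hσdef
  have hσw : ∀ q, q < r * k → ofWord σ q = ofWord ρ (if q < g then q else q + r) := by
    intro q hq
    have hxlt : (if q < g then q else q + r) < r * (k + 1) := by split_ifs <;> omega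
    have h3 := ofWord_pos ρ hxlt
    have hLq : ofWord σ q = ((σ ⟨q, hq⟩ : Fin k) : ℕ) + 1 := by
      unfold ofWord
      rw [dif_pos hq]
    have hv2 : ((σ ⟨q, hq⟩ : Fin k) : ℕ) = ofWord ρ (if q < g then q else q + r) - 1 := rfl
    rw [hLq, hv2]
    omega
  have hwEq : ∀ x, x < r * (k + 1) → ofWord (insS r k σ g) x = ofWord ρ x := by
    intro x hx
    rw [ofWord_insS σ g hg2 (by omega)]
    rcases Nat.lt_or_ge x g with h1 | h1
    · rw [insSW_lo h1, hσw x (by omega), if_pos h1]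
    · rcases Nat.lt_or_ge x (g + r) with h2 | h2
      · rw [insSW_blk h1 h2]
        exact ((hchar x hx).mpr ⟨h1, h2⟩).symm
      · rw [insSW_hi h2, hσw (x - r) (by omega), if_neg (by omega)]
        have e : x - r + r = x := by omega
        rw [e]
  refine ⟨σ, g, ?_, hg2, ofWord_ext _ _ hwEq⟩
  apply (mem_stirling_iff σ).mpr
  constructor
  · intro a ha1 hak
    have hset : (Finset.range (r * (k + 1))).filter (fun x => ofWord ρ x = a)
        = ((Finset.range (r * k)).filter (fun x => ofWord σ x = a)).image (shiftIns g r) := by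
      ext x
      simp only [Finset.mem_filter, Finset.mem_range, Finset.mem_image]
      constructor
      · rintro ⟨hxr, hxa⟩
        have hxnb : ¬(g ≤ x ∧ x < g + r) := by
          intro hc
          have := (hchar x (by omega)).mpr hc
          omega
        rcases Nat.lt_or_ge x g with h1 | h1
        · refine ⟨x, ⟨by omega, ?_⟩, if_pos h1⟩
          rw [hσw x (by omega), if_pos h1]
          exact hxa
        · have h2 : g + r ≤ x := by omega
          refine ⟨x - r, ⟨by omega, ?_⟩, ?_⟩
          · rw [hσw (x - r) (by omega), if_neg (by omega)]
            have e : x - r + r = x := by omega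
            rw [e]
            exact hxa
          · unfold shiftIns
            rw [if_neg (by omega)]
            omega
      · rintro ⟨y, ⟨hy, hya⟩, hsh⟩
        rw [← hsh]
        unfold shiftIns
        split_ifs with h
        · refine ⟨by omega, ?_⟩
          rw [hσw y (by omega), if_pos h] at hya
          exact hya
        · refine ⟨by omega, ?_⟩
          rw [hσw y (by omega), if_neg h] at hya
          exact hya
    have hc := hcnt a ha1 (by omega)
    rw [hset, Finset.card_image_of_injective _ (shiftIns_injective g r)] at hc
    exact hc
  · intro i l j hil hlj hjm he
    have he2 : ofWord ρ (if i < g then i else i + r) = ofWord ρ (if j < g then j else j + r) := by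
      rw [← hσw i (by omega), ← hσw j (by omega)]
      exact he
    have h1 := hcond (if i < g then i else i + r) (if l < g then l else l + r)
      (if j < g then j else j + r) (by split_ifs <;> omega) (by split_ifs <;> omega)
      (by split_ifs <;> omega) he2
    rw [hσw i (by omega), hσw l (by omega)]
    exact h1

/-! #### The Stirling-side recurrence -/

lemma qt_rec (r k i j : ℕ) (hr : 2 ≤ r) :
    qtnum r (k + 1) i j
      = ∑ a ∈ Finset.range (r * k + 1), ∑ b ∈ Finset.range (r * k + 1),
          qtnum r k a b * cfun (r * k + 1) a b i j := by
  classical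
  have hmul : r * (k + 1) = r * k + r := by ring
  have hq : qtnum r (k + 1) i j = ((stirlingSet r (k + 1)).filter (fun ρ =>
      lplatNum (r * (k + 1)) (ofWord ρ) = i ∧
      lascplatNum (r * (k + 1)) (ofWord ρ) = j)).card := rfl
  have hbij : ((stirlingSet r (k + 1)).filter (fun ρ =>
        lplatNum (r * (k + 1)) (ofWord ρ) = i ∧
        lascplatNum (r * (k + 1)) (ofWord ρ) = j)).card
      = (((stirlingSet r k) ×ˢ Finset.range (r * k + 1)).filter (fun pv =>
          lplatNum (r * (k + 1)) (ofWord (insS r k pv.1 pv.2)) = i ∧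
          lascplatNum (r * (k + 1)) (ofWord (insS r k pv.1 pv.2)) = j)).card := by
    symm
    apply Finset.card_bij (fun pv _ => insS r k pv.1 pv.2)
    · rintro ⟨σ, g⟩ hpv
      simp only [Finset.mem_filter, Finset.mem_product, Finset.mem_range] at hpv
      obtain ⟨⟨hσ, hg⟩, hst⟩ := hpv
      simp only [Finset.mem_filter]
      exact ⟨insS_mem σ g hσ (by omega) hr, hst.1, hst.2⟩
    · rintro ⟨σ, g⟩ hpv ⟨σ', g'⟩ hpv' heq
      simp only [Finset.mem_filter, Finset.mem_product, Finset.mem_range] at hpv hpv'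
      obtain ⟨⟨hσ, hg⟩, -⟩ := hpv
      obtain ⟨⟨hσ', hg'⟩, -⟩ := hpv'
      obtain ⟨h1, h2⟩ := insS_inj (show g ≤ r * k by omega) (show g' ≤ r * k by omega) hr heq
      rw [Prod.mk.injEq]
      exact ⟨h2, h1⟩
    · intro ρ hρ
      simp only [Finset.mem_filter] at hρ
      obtain ⟨hmem, hst1, hst2⟩ := hρ
      obtain ⟨σ, g, hσ, hg, he⟩ := insS_surj ρ hmem hr
      refine ⟨⟨σ, g⟩, ?_, he⟩
      simp only [Finset.mem_filter, Finset.mem_product, Finset.mem_range]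
      rw [he]
      exact ⟨⟨hσ, by omega⟩, hst1, hst2⟩
  have hprod : (((stirlingSet r k) ×ˢ Finset.range (r * k + 1)).filter (fun pv =>
          lplatNum (r * (k + 1)) (ofWord (insS r k pv.1 pv.2)) = i ∧
          lascplatNum (r * (k + 1)) (ofWord (insS r k pv.1 pv.2)) = j)).card
      = ∑ σ ∈ stirlingSet r k, ((Finset.range (r * k + 1)).filter (fun g =>
          lplatNum (r * (k + 1)) (ofWord (insS r k σ g)) = i ∧
          lascplatNum (r * (k + 1)) (ofWord (insS r k σ g)) = j)).card := by
    rw [Finset.card_filter, Finset.sum_product]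
    apply Finset.sum_congr rfl
    intro p _
    rw [Finset.card_filter]
  have hfiber : ∀ σ ∈ stirlingSet r k,
      ((Finset.range (r * k + 1)).filter (fun g =>
          lplatNum (r * (k + 1)) (ofWord (insS r k σ g)) = i ∧
          lascplatNum (r * (k + 1)) (ofWord (insS r k σ g)) = j)).card
        = cfun (r * k + 1) (lplatNum (r * k) (ofWord σ)) (lascplatNum (r * k) (ofWord σ)) i j := by
    intro σ hσ
    obtain ⟨hcnt, hcond⟩ := (mem_stirling_iff σ).mp hσ
    have htop : ∀ x, x < r * k → ofWord σ x < k + 1 := fun x hx => ofWord_lt σ hx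
    have hstat : ∀ g ∈ Finset.range (r * k + 1),
        ((lplatNum (r * (k + 1)) (ofWord (insS r k σ g)) = i ∧
          lascplatNum (r * (k + 1)) (ofWord (insS r k σ g)) = j)
        ↔ (((lplatSet (r * k) (ofWord σ)).filter (fun x => x + 1 ≠ g)).card + 1 = i ∧
           ((lascSet (r * k) (ofWord σ)).filter (fun x => x ≠ g ∧ x + 1 ≠ g)).card + 1 = j)) := by
      intro g hg
      rw [Finset.mem_range] at hg
      have hg2 : g ≤ r * k := by omega
      have hL1 : lplatNum (r * (k + 1)) (ofWord (insS r k σ g))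
          = ((lplatSet (r * k) (ofWord σ)).filter (fun x => x + 1 ≠ g)).card + 1 := by
        rw [lplatNum_eq]
        have e1 : lplatSet (r * (k + 1)) (ofWord (insS r k σ g))
            = lplatSet (r * k + r) (ofWord (insS r k σ g)) := by
          unfold lplatSet
          rw [show r * (k + 1) - 1 = r * k + r - 1 from by omega]
        rw [e1, lplatSet_congr (r * k + r) (ofWord (insS r k σ g))
            (insSW g r (k + 1) (ofWord σ)) (fun x hx => ofWord_insS σ g hg2 hx),
          lplat_insSW (r * k) g r (k + 1) (ofWord σ) hg2 hr (fun x hx => ofWord_lt σ hx),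
          card_insert_image_shift g r (by omega)]
      have hL2 : lascplatNum (r * (k + 1)) (ofWord (insS r k σ g))
          = ((lascSet (r * k) (ofWord σ)).filter (fun x => x ≠ g ∧ x + 1 ≠ g)).card + 1 := by
        rw [lascplatNum_eq]
        have e1 : lascSet (r * (k + 1)) (ofWord (insS r k σ g))
            = lascSet (r * k + r) (ofWord (insS r k σ g)) := by
          unfold lascSet
          rw [show r * (k + 1) - 1 = r * k + r - 1 from by omega]
        rw [e1, lascSet_congr (r * k + r) (ofWord (insS r k σ g))
            (insSW g r (k + 1) (ofWord σ)) (fun x hx => ofWord_insS σ g hg2 hx),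
          lasc_insSW (r * k) g r (k + 1) (ofWord σ) hg2 hr (fun x hx => ofWord_lt σ hx),
          card_insert_image_shift g r (by omega)]
      rw [hL1, hL2]
    rw [Finset.filter_congr hstat,
      abstract_count (r * k + 1) (lascSet (r * k) (ofWord σ)) (lplatSet (r * k) (ofWord σ))
        (lascSet_subset_lplatSet (r * k) (ofWord σ) hcond)
        (fun x hx => by
          simp only [lplatSet, Finset.mem_filter, Finset.mem_range] at hx
          omega)
        (fun x hx => lascSet_succ _ _ hx) (fun x hx y hy => lascSet_lplat _ _ hx hy) i j,
      lplatNum_eq, lascplatNum_eq]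
  have hbound1 : ∀ σ ∈ stirlingSet r k, lplatNum (r * k) (ofWord σ) < r * k + 1 := by
    intro σ _
    have h1 : lplatNum (r * k) (ofWord σ) ≤ (Finset.range (r * k - 1)).card :=
      Finset.card_filter_le _ _
    rw [Finset.card_range] at h1
    omega
  have hbound2 : ∀ σ ∈ stirlingSet r k, lascplatNum (r * k) (ofWord σ) < r * k + 1 := by
    intro σ _
    have h1 : lascplatNum (r * k) (ofWord σ) ≤ (Finset.range (r * k - 1)).card :=
      Finset.card_filter_le _ _
    rw [Finset.card_range] at h1
    omega
  have hsum := sum_stats (stirlingSet r k)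
      (fun σ => lplatNum (r * k) (ofWord σ)) (fun σ => lascplatNum (r * k) (ofWord σ))
      (r * k + 1) hbound1 hbound2 (fun a b => cfun (r * k + 1) a b i j)
  rw [hq, hbij, hprod, Finset.sum_congr rfl hfiber, hsum]
  rfl

/-! #### Base cases -/

lemma pt_base (r i j : ℕ) : ptnum r 0 i j = if 0 = i ∧ 0 = j then 1 else 0 := by
  classical
  unfold ptnum clusterSet
  rw [Finset.filter_filter]
  have huniv : (Finset.univ : Finset (Equiv.Perm (Fin (r * 0 + 1)))) = {1} := by
    apply Finset.eq_singleton_iff_unique_mem.mpr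
    refine ⟨Finset.mem_univ _, fun π _ => ?_⟩
    have hss : Subsingleton (Fin (r * 0 + 1)) := by
      rw [show r * 0 + 1 = 1 from by omega]
      infer_instance
    exact Equiv.ext fun x => Subsingleton.elim _ _
  rw [huniv, Finset.filter_singleton]
  have h1 : IsCluster r 0 (ofPerm (1 : Equiv.Perm (Fin (r * 0 + 1)))⁻¹) :=
    fun j hj => absurd hj (by omega)
  have hdes : desNum (r * 0 + 1) (ofPerm (1 : Equiv.Perm (Fin (r * 0 + 1)))) = 0 := by
    unfold desNum
    rw [show r * 0 + 1 - 1 = 0 from by omega, Finset.range_zero, Finset.filter_empty,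
      Finset.card_empty]
  have hlpk : lpkNum (r * 0 + 1) (ofPerm (1 : Equiv.Perm (Fin (r * 0 + 1)))) = 0 := by
    unfold lpkNum
    rw [show r * 0 + 1 - 1 = 0 from by omega, Finset.range_zero, Finset.filter_empty,
      Finset.card_empty]
  by_cases hc : 0 = i ∧ 0 = j
  · rw [if_pos ⟨h1, by rw [hdes]; exact hc.1, by rw [hlpk]; exact hc.2⟩, if_pos hc,
      Finset.card_singleton]
  · have hnc : ¬(IsCluster r 0 (ofPerm (1 : Equiv.Perm (Fin (r * 0 + 1)))⁻¹) ∧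
        desNum (r * 0 + 1) (ofPerm (1 : Equiv.Perm (Fin (r * 0 + 1)))) = i ∧
        lpkNum (r * 0 + 1) (ofPerm (1 : Equiv.Perm (Fin (r * 0 + 1)))) = j) := by
      rintro ⟨-, hd, hl⟩
      rw [hdes] at hd
      rw [hlpk] at hl
      exact hc ⟨hd, hl⟩
    rw [if_neg hnc, if_neg hc, Finset.card_empty]

lemma qt_base (r i j : ℕ) : qtnum r 0 i j = if 0 = i ∧ 0 = j then 1 else 0 := by
  classical
  unfold qtnum stirlingSet
  rw [Finset.filter_filter]
  have hempty : IsEmpty (Fin (r * 0)) := by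
    rw [show r * 0 = 0 from by omega]
    infer_instance
  have huniv : (Finset.univ : Finset (Fin (r * 0) → Fin 0))
      = {fun x => (hempty.false x).elim} := by
    apply Finset.eq_singleton_iff_unique_mem.mpr
    refine ⟨Finset.mem_univ _, fun ρ _ => ?_⟩
    funext x
    exact (hempty.false x).elim
  rw [huniv, Finset.filter_singleton]
  set ρ0 : Fin (r * 0) → Fin 0 := fun x => (hempty.false x).elim with hρ0
  have hcnt : ∀ a : Fin 0, (Finset.univ.filter (fun i => ρ0 i = a)).card = r :=
    fun a => a.elim0
  have hcond : ∀ i l j : Fin (r * 0), i < l → l < j → ρ0 i = ρ0 j → ρ0 i ≤ ρ0 l :=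
    fun i => (hempty.false i).elim
  have hlp : lplatNum (r * 0) (ofWord ρ0) = 0 := by
    unfold lplatNum
    rw [show r * 0 - 1 = 0 from by omega, Finset.range_zero, Finset.filter_empty,
      Finset.card_empty]
  have hla : lascplatNum (r * 0) (ofWord ρ0) = 0 := by
    unfold lascplatNum
    rw [show r * 0 - 1 = 0 from by omega, Finset.range_zero, Finset.filter_empty,
      Finset.card_empty]
  by_cases hc : 0 = i ∧ 0 = j
  · rw [if_pos ⟨⟨hcnt, hcond⟩, by rw [hlp]; exact hc.1, by rw [hla]; exact hc.2⟩, if_pos hc,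
      Finset.card_singleton]
  · have hnc : ¬((∀ a : Fin 0, (Finset.univ.filter (fun i => ρ0 i = a)).card = r) ∧
        (∀ i l j : Fin (r * 0), i < l → l < j → ρ0 i = ρ0 j → ρ0 i ≤ ρ0 l) ∧
        (lplatNum (r * 0) (ofWord ρ0) = i ∧ lascplatNum (r * 0) (ofWord ρ0) = j)) := by
      rintro ⟨-, -, hd, hl⟩
      rw [hlp] at hd
      rw [hla] at hl
      exact hc ⟨hd, hl⟩
    rw [if_neg ?_, if_neg hc, Finset.card_empty]
    intro hcon
    exact hnc ⟨hcon.1.1, hcon.1.2, hcon.2⟩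

lemma main_eq (r : ℕ) (hr : 2 ≤ r) : ∀ k i j, ptnum r k i j = qtnum r k i j := by
  intro k
  induction k with
  | zero =>
      intro i j
      rw [pt_base, qt_base]
  | succ k ih =>
      intro i j
      rw [pt_rec r k i j hr, qt_rec r k i j hr]
      apply Finset.sum_congr rfl
      intro a _
      apply Finset.sum_congr rfl
      intro b _
      rw [ih a b]
end Stmt7Aux

/-- `(des, lpk)` over inverse `2134⋯(r+1)`-clusters is jointly equidistributed
with `(lplat, lascplat)` over `r`-Stirling permutations of order `k`. -/
theorem stmt7 (r k : ℕ) (hr : 2 ≤ r) (hk : 1 ≤ k) (i j : ℕ) :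
    ptnum r k i j = qtnum r k i j :=
  Stmt7Aux.main_eq r hr k i j
end
end

section
/- Let r ≥ 2 and k ≥ 1, and let p̃_{r,k}(i,j) be the number of permutations π ∈ S_{rk+1} whose inverse is a 2134⋯(r+1)-cluster with des(π) = i and lpk(π) = j. Then p̃_{r,k+1}(i,j) = j·p̃_{r,k}(i,j) + (i-j+1)·p̃_{r,k}(i,j-1) + j·p̃_{r,k}(i-1,j) + (rk-i-j+3)·p̃_{r,k}(i-1,j-1). -/
open scoped Classical

noncomputable section

-- basic ofPerm facts
lemma ofPerm_lt {n : ℕ} (π : Equiv.Perm (Fin n)) {i : ℕ} (h : i < n) :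
    ofPerm π i < n := by
  simp [ofPerm, h]

lemma ofPerm_inv_ofPerm {n : ℕ} (π : Equiv.Perm (Fin n)) {i : ℕ} (h : i < n) :
    ofPerm π⁻¹ (ofPerm π i) = i := by
  simp only [ofPerm, dif_pos h]
  have h2 : ((π ⟨i, h⟩ : Fin n) : ℕ) < n := (π ⟨i, h⟩).isLt
  simp only [dif_pos h2]
  simp

lemma ofPerm_ofPerm_inv {n : ℕ} (π : Equiv.Perm (Fin n)) {i : ℕ} (h : i < n) :
    ofPerm π (ofPerm π⁻¹ i) = i := by
  simpa using ofPerm_inv_ofPerm π⁻¹ h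

lemma ofPerm_inj {n : ℕ} (π : Equiv.Perm (Fin n)) {i j : ℕ} (hi : i < n) (hj : j < n)
    (h : ofPerm π i = ofPerm π j) : i = j := by
  have := congrArg (ofPerm π⁻¹) h
  rwa [ofPerm_inv_ofPerm π hi, ofPerm_inv_ofPerm π hj] at this

/-- The extended one-line word (word of positions of values). -/
def extw (n : ℕ) (w : ℕ → ℕ) (a : ℕ) : ℕ → ℕ :=
  fun v => if v < a then w v else if v = a then n else if v ≤ n then w (v - 1) else v

/-- The extended inverse word (word of values at positions). -/
def extv (n : ℕ) (s : ℕ → ℕ) (a : ℕ) : ℕ → ℕ :=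
  fun p => if p < n then (if s p < a then s p else s p + 1) else if p = n then a else p

section pt
variable {n a v p : ℕ} {w s : ℕ → ℕ}

lemma extw_low (h : v < a) : extw n w a v = w v := if_pos h
lemma extw_a : extw n w a a = n := by simp [extw]
lemma extw_mid (h1 : a < v) (h2 : v ≤ n) : extw n w a v = w (v - 1) := by
  have : ¬ v < a := by omega
  have h3 : v ≠ a := by omega
  simp [extw, this, h3, h2]
lemma extw_top (ha : a ≤ n) (h : n < v) : extw n w a v = v := by
  have h1 : ¬ v < a := by omega
  have h2 : v ≠ a := by omega
  have h3 : ¬ v ≤ n := by omega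
  simp [extw, h1, h2, h3]
lemma extv_low (h : p < n) (h2 : s p < a) : extv n s a p = s p := by simp [extv, h, h2]
lemma extv_high (h : p < n) (h2 : a ≤ s p) : extv n s a p = s p + 1 := by
  have : ¬ s p < a := by omega
  simp [extv, h, this]
lemma extv_n : extv n s a n = a := by simp [extv]
lemma extv_top (h : n < p) : extv n s a p = p := by
  have h1 : ¬ p < n := by omega
  have h2 : p ≠ n := by omega
  simp [extv, h1, h2]

end pt

section ext
variable {n m : ℕ}

lemma extw_lt (π : Equiv.Perm (Fin n)) {a : ℕ} (ha : a < n) (hm : n < m) :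
    ∀ v < m, extw n (ofPerm π) a v < m := by
  intro v hv
  rcases lt_trichotomy v a with h | h | h
  · rw [extw_low h]; exact lt_trans (ofPerm_lt π (lt_trans h ha)) hm
  · subst h; rw [extw_a]; exact hm
  · rcases le_or_gt v n with h2 | h2
    · rw [extw_mid h h2]
      exact lt_trans (ofPerm_lt π (by omega)) hm
    · rw [extw_top (le_of_lt ha) h2]; exact hv

lemma extv_lt (π : Equiv.Perm (Fin n)) {a : ℕ} (ha : a < n) (hm : n < m) :
    ∀ p < m, extv n (ofPerm π⁻¹) a p < m := by
  intro p hp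
  rcases lt_trichotomy p n with h | h | h
  · rcases lt_or_ge (ofPerm π⁻¹ p) a with h2 | h2
    · rw [extv_low h h2]; omega
    · rw [extv_high h h2]
      have := ofPerm_lt π⁻¹ h
      omega
  · subst h; rw [extv_n]; omega
  · rw [extv_top h]; exact hp

lemma extv_extw (π : Equiv.Perm (Fin n)) {a : ℕ} (ha : a < n) (v : ℕ) :
    extv n (ofPerm π⁻¹) a (extw n (ofPerm π) a v) = v := by
  rcases lt_trichotomy v a with h | h | h
  · have hvn : v < n := lt_trans h ha
    rw [extw_low h, extv_low (ofPerm_lt π hvn) (by rw [ofPerm_inv_ofPerm π hvn]; exact h)]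
    exact ofPerm_inv_ofPerm π hvn
  · subst h; rw [extw_a, extv_n]
  · rcases le_or_gt v n with h2 | h2
    · have hv1 : v - 1 < n := by omega
      rw [extw_mid h h2, extv_high (ofPerm_lt π hv1)
        (by rw [ofPerm_inv_ofPerm π hv1]; omega), ofPerm_inv_ofPerm π hv1]
      omega
    · rw [extw_top (le_of_lt ha) h2, extv_top h2]

lemma extw_extv (π : Equiv.Perm (Fin n)) {a : ℕ} (ha : a < n) (p : ℕ) :
    extw n (ofPerm π) a (extv n (ofPerm π⁻¹) a p) = p := by
  rcases lt_trichotomy p n with h | h | h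
  · have hs : ofPerm π⁻¹ p < n := ofPerm_lt π⁻¹ h
    rcases lt_or_ge (ofPerm π⁻¹ p) a with h2 | h2
    · rw [extv_low h h2, extw_low h2, ofPerm_ofPerm_inv π h]
    · rw [extv_high h h2, extw_mid (by omega) (by omega), Nat.add_sub_cancel,
        ofPerm_ofPerm_inv π h]
  · subst h; rw [extv_n, extw_a]
  · rw [extv_top h, extw_top (le_of_lt ha) h]

/-- The extended permutation of `Fin m`. -/
def extPerm (hm : n < m) (π : Equiv.Perm (Fin n)) (a : ℕ) (ha : a < n) :
    Equiv.Perm (Fin m) where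
  toFun v := ⟨extw n (ofPerm π) a v, extw_lt π ha hm v v.isLt⟩
  invFun p := ⟨extv n (ofPerm π⁻¹) a p, extv_lt π ha hm p p.isLt⟩
  left_inv v := Fin.ext (extv_extw π ha v)
  right_inv p := Fin.ext (extw_extv π ha p)

lemma ofPerm_extPerm (hm : n < m) (π : Equiv.Perm (Fin n)) (a : ℕ) (ha : a < n) :
    ∀ v < m, ofPerm (extPerm hm π a ha) v = extw n (ofPerm π) a v := by
  intro v hv
  simp [ofPerm, hv, extPerm]

lemma ofPerm_extPerm_inv (hm : n < m) (π : Equiv.Perm (Fin n)) (a : ℕ) (ha : a < n) :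
    ∀ p < m, ofPerm (extPerm hm π a ha)⁻¹ p = extv n (ofPerm π⁻¹) a p := by
  intro p hp
  simp only [ofPerm, dif_pos hp]
  rfl

end ext

def lpkP (w : ℕ → ℕ) (i : ℕ) : Prop :=
  (1 ≤ i ∧ w (i - 1) < w i ∧ w (i + 1) < w i) ∨ (i = 0 ∧ w 1 < w 0)

def dInd (w : ℕ → ℕ) (a : ℕ) : ℕ := if 1 ≤ a ∧ w a < w (a - 1) then 1 else 0
def lInd (n : ℕ) (w : ℕ → ℕ) (a : ℕ) : ℕ := if a + 1 < n ∧ lpkP w a then 1 else 0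
def lInd' (w : ℕ → ℕ) (a : ℕ) : ℕ := if 1 ≤ a ∧ lpkP w (a - 1) then 1 else 0

lemma desNum_eq (n : ℕ) (w : ℕ → ℕ) :
    desNum n w = ∑ i ∈ Finset.range (n - 1), (if w (i + 1) < w i then 1 else 0) := by
  rw [desNum, Finset.card_filter]

lemma lpkNum_eq (n : ℕ) (w : ℕ → ℕ) :
    lpkNum n w = ∑ i ∈ Finset.range (n - 1), (if lpkP w i then 1 else 0) := by
  rw [lpkNum, Finset.card_filter]
  exact Finset.sum_congr rfl (fun i _ => if_congr (by rw [lpkP]) rfl rfl)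

lemma desNum_congr (n : ℕ) {f g : ℕ → ℕ} (h : ∀ v < n, f v = g v) :
    desNum n f = desNum n g := by
  rw [desNum_eq, desNum_eq]
  refine Finset.sum_congr rfl (fun i hi => ?_)
  have hi' := Finset.mem_range.mp hi
  rw [h i (by omega), h (i+1) (by omega)]

lemma lpkNum_congr (n : ℕ) {f g : ℕ → ℕ} (h : ∀ v < n, f v = g v) :
    lpkNum n f = lpkNum n g := by
  rw [lpkNum_eq, lpkNum_eq]
  refine Finset.sum_congr rfl (fun i hi => ?_)
  have hi' := Finset.mem_range.mp hi
  have h0 : f 0 = g 0 := h 0 (by omega)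
  have h1 : f 1 = g 1 := h 1 (by omega)
  unfold lpkP
  rw [h i (by omega), h (i+1) (by omega), h (i-1) (by omega), h0, h1]

lemma des_ext {n m a : ℕ} (w : ℕ → ℕ) (hw : ∀ v < n, w v < n) (ha : a < n)
    (hm : n + 2 ≤ m) :
    desNum m (extw n w a) + dInd w a = desNum n w + 1 := by
  set w' := extw n w a with hw'
  set F : ℕ → ℕ := fun v => if w' (v+1) < w' v then 1 else 0 with hF
  set G : ℕ → ℕ := fun v => if w (v+1) < w v then 1 else 0 with hG
  have Flow : ∀ v, v + 1 < a → F v = G v := by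
    intro v hv
    rw [hF, hG]
    simp only
    rw [hw', extw_low (by omega), extw_low (by omega)]
  have Fam : a ≥ 1 → F (a-1) = 0 := by
    intro h1
    rw [hF]; simp only
    have e : (a-1)+1 = a := by omega
    rw [e, hw', extw_a, extw_low (by omega)]
    have h2 : ¬ (n < w (a-1)) := by have := hw (a-1) (by omega); omega
    simp [h2]
  have Fa : F a = 1 := by
    rw [hF]; simp only
    rw [hw', extw_a, extw_mid (by omega) (by omega)]
    have e : a + 1 - 1 = a := by omega
    rw [e]
    have h2 : w a < n := hw a ha
    simp [h2]
  have Fmid : ∀ v, a < v → v < n → F v = G (v-1) := by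
    intro v h1 h2
    rw [hF, hG]; simp only
    rw [hw', extw_mid (by omega) (by omega), extw_mid (by omega) (by omega)]
    have e : v + 1 - 1 = (v-1)+1 := by omega
    rw [e]
  have Ftop : ∀ v, n ≤ v → v < m - 1 → F v = 0 := by
    intro v h1 h2
    rw [hF]; simp only
    rcases eq_or_lt_of_le h1 with h | h
    · rw [hw', extw_mid (show a < v by omega) (show v ≤ n by omega),
        extw_top (show a ≤ n by omega) (show n < v + 1 by omega)]
      have h3 : ¬ (v + 1 < w (v-1)) := by have := hw (v-1) (by omega); omega
      simp [h3]
    · rw [hw', extw_top (show a ≤ n by omega) (show n < v + 1 by omega),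
        extw_top (show a ≤ n by omega) h]
      simp
  have split1 := Finset.sum_Ico_consecutive F (show 0 ≤ a by omega) (show a ≤ m - 1 by omega)
  have split2 := Finset.sum_Ico_consecutive F (show a ≤ n by omega) (show n ≤ m - 1 by omega)
  have S3 : (∑ v ∈ Finset.Ico n (m-1), F v) = 0 :=
    Finset.sum_eq_zero (fun v hv => by
      have h := Finset.mem_Ico.mp hv
      exact Ftop v h.1 h.2)
  have S2 : (∑ v ∈ Finset.Ico a n, F v) = 1 + ∑ v ∈ Finset.Ico a (n-1), G v := by
    rw [Finset.sum_eq_sum_Ico_succ_bot (show a < n by omega) F, Fa]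
    congr 1
    rw [Finset.sum_Ico_eq_sum_range F, Finset.sum_Ico_eq_sum_range G]
    have e : n - (a+1) = n - 1 - a := by omega
    rw [e]
    refine Finset.sum_congr rfl (fun i hi => ?_)
    have hi' := Finset.mem_range.mp hi
    have e1 : a + 1 + i = (a + i) + 1 := by omega
    rw [e1, Fmid (a+i+1) (by omega) (by omega)]
    have e2 : (a+i+1) - 1 = a + i := by omega
    rw [e2]
  have S1 : (∑ v ∈ Finset.Ico 0 a, F v) + dInd w a = ∑ v ∈ Finset.Ico 0 a, G v := by
    rcases Nat.eq_zero_or_pos a with h | h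
    · subst h; simp [dInd]
    · have e : a = (a-1) + 1 := by omega
      have t1 : (∑ v ∈ Finset.Ico 0 a, F v)
          = (∑ v ∈ Finset.Ico 0 (a-1), F v) + F (a-1) := by
        conv_lhs => rw [e]
        exact Finset.sum_Ico_succ_top (by omega) F
      have t2 : (∑ v ∈ Finset.Ico 0 a, G v)
          = (∑ v ∈ Finset.Ico 0 (a-1), G v) + G (a-1) := by
        conv_lhs => rw [e]
        exact Finset.sum_Ico_succ_top (by omega) G
      have eF : (∑ v ∈ Finset.Ico 0 (a-1), F v) = ∑ v ∈ Finset.Ico 0 (a-1), G v :=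
        Finset.sum_congr rfl (fun v hv => Flow v (by
          have h2 := (Finset.mem_Ico.mp hv).2; omega))
      have hd : dInd w a = G (a-1) := by
        rw [hG, dInd]; simp only
        have e2 : (a-1)+1 = a := by omega
        rw [e2]
        exact if_congr ⟨fun hh => hh.2, fun h2 => ⟨h, h2⟩⟩ rfl rfl
      have hFam := Fam (by omega)
      omega
  have final := Finset.sum_Ico_consecutive G (show 0 ≤ a by omega)
    (show a ≤ n - 1 by omega)
  have hdes' : desNum m w' = ∑ v ∈ Finset.Ico 0 (m-1), F v := by
    rw [desNum_eq, Finset.range_eq_Ico]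
  have hdes : desNum n w = ∑ v ∈ Finset.Ico 0 (n-1), G v := by
    rw [desNum_eq, Finset.range_eq_Ico]
  omega

lemma lpk_ext {n m a : ℕ} (w : ℕ → ℕ) (hw : ∀ v < n, w v < n) (ha : a < n)
    (hm : n + 2 ≤ m) :
    lpkNum m (extw n w a) + lInd n w a + lInd' w a = lpkNum n w + 1 := by
  set w' := extw n w a with hw'
  set F : ℕ → ℕ := fun v => if lpkP w' v then 1 else 0 with hF
  set G : ℕ → ℕ := fun v => if lpkP w v then 1 else 0 with hG
  have Flow : ∀ v, v + 1 < a → F v = G v := by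
    intro v hv
    have ha2 : 2 ≤ a := by omega
    rw [hF, hG]; simp only
    refine if_congr ?_ rfl rfl
    unfold lpkP
    rw [hw', extw_low (show v - 1 < a by omega), extw_low (show v < a by omega),
      extw_low (show v + 1 < a by omega), extw_low (show 1 < a by omega),
      extw_low (show 0 < a by omega)]
  have Fam : a ≥ 1 → F (a-1) = 0 := by
    intro h1
    rw [hF]; simp only
    have hnot : ¬ lpkP w' (a-1) := by
      intro hP
      rcases hP with ⟨p1, p2, p3⟩ | ⟨p1, p2⟩
      · rw [show a - 1 + 1 = a from by omega, hw', extw_a,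
          extw_low (show a - 1 < a from by omega)] at p3
        have := hw (a-1) (by omega)
        omega
      · have ha1 : a = 1 := by omega
        rw [hw', ha1, extw_a, extw_low (show 0 < 1 from by omega)] at p2
        have := hw 0 (by omega)
        omega
    simp [hnot]
  have Fa : F a = 1 := by
    rw [hF]; simp only
    have hyes : lpkP w' a := by
      rcases Nat.eq_zero_or_pos a with h0 | h0
      · right
        subst h0
        constructor; rfl
        rw [hw', extw_a, extw_mid (show 0 < 1 from by omega) (show 1 ≤ n from by omega)]
        exact hw 0 (by omega)
      · left
        refine ⟨h0, ?_, ?_⟩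
        · rw [hw', extw_a, extw_low (show a - 1 < a from by omega)]
          exact hw (a-1) (by omega)
        · rw [hw', extw_a, extw_mid (show a < a + 1 from by omega) (show a + 1 ≤ n from by omega)]
          rw [show a + 1 - 1 = a from by omega]
          exact hw a ha
    simp [hyes]
  have Fa1 : F (a+1) = 0 := by
    rw [hF]; simp only
    have hnot : ¬ lpkP w' (a+1) := by
      intro hP
      rcases hP with ⟨p1, p2, p3⟩ | ⟨p1, p2⟩
      · rw [show a + 1 - 1 = a from by omega, hw', extw_a,
          extw_mid (show a < a + 1 from by omega) (show a + 1 ≤ n from by omega)] at p2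
        have := hw (a + 1 - 1) (by omega)
        omega
      · omega
    simp [hnot]
  have Fmid : ∀ v, a + 2 ≤ v → v < n → F v = G (v-1) := by
    intro v h1 h2
    rw [hF, hG]; simp only
    refine if_congr ?_ rfl rfl
    unfold lpkP
    constructor
    · rintro (⟨p1, p2, p3⟩ | ⟨p1, p2⟩)
      · left
        rw [hw', extw_mid (show a < v - 1 from by omega) (show v - 1 ≤ n from by omega),
          extw_mid (show a < v from by omega) (show v ≤ n from by omega)] at p2
        rw [hw', extw_mid (show a < v + 1 from by omega) (show v + 1 ≤ n from by omega),
          extw_mid (show a < v from by omega) (show v ≤ n from by omega)] at p3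
        refine ⟨by omega, ?_, ?_⟩
        · rwa [show v - 1 - 1 = v - 2 from rfl, show v - 2 = v - 1 - 1 from rfl] at p2
        · rw [show v - 1 + 1 = v from by omega]
          rwa [show v + 1 - 1 = v from by omega] at p3
      · omega
    · rintro (⟨p1, p2, p3⟩ | ⟨p1, p2⟩)
      · left
        refine ⟨by omega, ?_, ?_⟩
        · rw [hw', extw_mid (show a < v - 1 from by omega) (show v - 1 ≤ n from by omega),
            extw_mid (show a < v from by omega) (show v ≤ n from by omega)]
          exact p2
        · rw [hw', extw_mid (show a < v + 1 from by omega) (show v + 1 ≤ n from by omega),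
            extw_mid (show a < v from by omega) (show v ≤ n from by omega),
            show v + 1 - 1 = v - 1 + 1 from by omega]
          exact p3
      · omega
  have Ftop : ∀ v, n ≤ v → v < m - 1 → F v = 0 := by
    intro v h1 h2
    rw [hF]; simp only
    have hnot : ¬ lpkP w' v := by
      intro hP
      rcases hP with ⟨p1, p2, p3⟩ | ⟨p1, p2⟩
      · rcases eq_or_lt_of_le h1 with h | h
        · rw [hw', extw_top (show a ≤ n from by omega) (show n < v + 1 from by omega),
            extw_mid (show a < v from by omega) (show v ≤ n from by omega)] at p3
          have := hw (v-1) (by omega)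
          omega
        · rw [hw', extw_top (show a ≤ n from by omega) (show n < v + 1 from by omega),
            extw_top (show a ≤ n from by omega) h] at p3
          omega
      · omega
    simp [hnot]
  have split1 := Finset.sum_Ico_consecutive F (show 0 ≤ a by omega) (show a ≤ m - 1 by omega)
  have split2 := Finset.sum_Ico_consecutive F (show a ≤ n by omega) (show n ≤ m - 1 by omega)
  have S3 : (∑ v ∈ Finset.Ico n (m-1), F v) = 0 :=
    Finset.sum_eq_zero (fun v hv => by
      have h := Finset.mem_Ico.mp hv
      exact Ftop v h.1 h.2)
  have S2 : (∑ v ∈ Finset.Ico a n, F v) + lInd n w a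
      = 1 + ∑ v ∈ Finset.Ico a (n-1), G v := by
    rw [Finset.sum_eq_sum_Ico_succ_bot (show a < n by omega) F, Fa]
    rcases le_or_gt n (a+1) with h | h
    · have e1 : Finset.Ico (a+1) n = ∅ := by
        rw [Finset.Ico_eq_empty_iff]; omega
      have e2 : Finset.Ico a (n-1) = ∅ := by
        rw [Finset.Ico_eq_empty_iff]; omega
      have e3 : lInd n w a = 0 := by
        unfold lInd
        have : ¬ (a + 1 < n ∧ lpkP w a) := by omega
        simp [this]
      rw [e1, e2, e3]; simp
    · rw [Finset.sum_eq_sum_Ico_succ_bot (show a + 1 < n by omega) F, Fa1,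
        Finset.sum_eq_sum_Ico_succ_bot (show a < n - 1 by omega) G]
      have e4 : lInd n w a = G a := by
        unfold lInd; rw [hG]; simp only
        exact if_congr ⟨fun hh => hh.2, fun h2 => ⟨by omega, h2⟩⟩ rfl rfl
      have e5 : (∑ v ∈ Finset.Ico (a+1+1) n, F v) = ∑ v ∈ Finset.Ico (a+1) (n-1), G v := by
        rw [Finset.sum_Ico_eq_sum_range F, Finset.sum_Ico_eq_sum_range G,
          show n - (a+1+1) = n - 1 - (a+1) from by omega]
        refine Finset.sum_congr rfl (fun i hi => ?_)
        have hi' := Finset.mem_range.mp hi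
        rw [Fmid (a+1+1+i) (by omega) (by omega), show a+1+1+i-1 = a+1+i from by omega]
      omega
  have S1 : (∑ v ∈ Finset.Ico 0 a, F v) + lInd' w a = ∑ v ∈ Finset.Ico 0 a, G v := by
    rcases Nat.eq_zero_or_pos a with h | h
    · subst h; simp [lInd']
    · have e : a = (a-1) + 1 := by omega
      have t1 : (∑ v ∈ Finset.Ico 0 a, F v)
          = (∑ v ∈ Finset.Ico 0 (a-1), F v) + F (a-1) := by
        conv_lhs => rw [e]
        exact Finset.sum_Ico_succ_top (by omega) F
      have t2 : (∑ v ∈ Finset.Ico 0 a, G v)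
          = (∑ v ∈ Finset.Ico 0 (a-1), G v) + G (a-1) := by
        conv_lhs => rw [e]
        exact Finset.sum_Ico_succ_top (by omega) G
      have eF : (∑ v ∈ Finset.Ico 0 (a-1), F v) = ∑ v ∈ Finset.Ico 0 (a-1), G v :=
        Finset.sum_congr rfl (fun v hv => Flow v (by
          have h2 := (Finset.mem_Ico.mp hv).2; omega))
      have hd : lInd' w a = G (a-1) := by
        unfold lInd'; rw [hG]; simp only
        exact if_congr ⟨fun hh => hh.2, fun h2 => ⟨h, h2⟩⟩ rfl rfl
      have hFam := Fam (by omega)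
      omega
  have final := Finset.sum_Ico_consecutive G (show 0 ≤ a by omega)
    (show a ≤ n - 1 by omega)
  have hlpk' : lpkNum m w' = ∑ v ∈ Finset.Ico 0 (m-1), F v := by
    rw [lpkNum_eq, Finset.range_eq_Ico]
  have hlpk : lpkNum n w = ∑ v ∈ Finset.Ico 0 (n-1), G v := by
    rw [lpkNum_eq, Finset.range_eq_Ico]
  omega

-- indicator characterizations
lemma dInd_one {w : ℕ → ℕ} {a : ℕ} : dInd w a = 1 ↔ (1 ≤ a ∧ w a < w (a-1)) := by
  unfold dInd; split <;> simp_all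
lemma dInd_le {w : ℕ → ℕ} {a : ℕ} : dInd w a ≤ 1 := by
  unfold dInd; split <;> simp
lemma lInd_one {n : ℕ} {w : ℕ → ℕ} {a : ℕ} : lInd n w a = 1 ↔ (a + 1 < n ∧ lpkP w a) := by
  unfold lInd; split <;> simp_all
lemma lInd_le {n : ℕ} {w : ℕ → ℕ} {a : ℕ} : lInd n w a ≤ 1 := by
  unfold lInd; split <;> simp
lemma lInd'_one {w : ℕ → ℕ} {a : ℕ} : lInd' w a = 1 ↔ (1 ≤ a ∧ lpkP w (a-1)) := by
  unfold lInd'; split <;> simp_all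
lemma lInd'_le {w : ℕ → ℕ} {a : ℕ} : lInd' w a ≤ 1 := by
  unfold lInd'; split <;> simp

-- implications between classes
lemma L'_imp_D {w : ℕ → ℕ} {a : ℕ} (h : 1 ≤ a ∧ lpkP w (a-1)) :
    (1 ≤ a ∧ w a < w (a-1)) := by
  obtain ⟨h1, h2⟩ := h
  refine ⟨h1, ?_⟩
  rcases h2 with ⟨p1, p2, p3⟩ | ⟨p1, p2⟩
  · rwa [show a - 1 + 1 = a from by omega] at p3
  · have : a = 1 := by omega
    subst this
    simpa using p2
lemma L_imp_nD {n : ℕ} {w : ℕ → ℕ} {a : ℕ} (h : a + 1 < n ∧ lpkP w a) :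
    ¬ (1 ≤ a ∧ w a < w (a-1)) := by
  rintro ⟨h1, h2⟩
  rcases h.2 with ⟨p1, p2, p3⟩ | ⟨p1, p2⟩
  · omega
  · omega
lemma L_imp_nL' {n : ℕ} {w : ℕ → ℕ} {a : ℕ} (h : a + 1 < n ∧ lpkP w a) :
    ¬ (1 ≤ a ∧ lpkP w (a-1)) := by
  intro h2
  exact L_imp_nD h (L'_imp_D h2)

-- cardinalities of the classes
lemma cntD {n : ℕ} (w : ℕ → ℕ) :
    ((Finset.range n).filter (fun a => 1 ≤ a ∧ w a < w (a-1))).card = desNum n w := by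
  rw [desNum]
  refine Finset.card_bij' (fun a _ => a - 1) (fun i _ => i + 1) ?_ ?_ ?_ ?_
  · intro a ha
    simp only [Finset.mem_filter, Finset.mem_range] at ha ⊢
    refine ⟨by omega, ?_⟩
    rw [show a - 1 + 1 = a from by omega]
    exact ha.2.2
  · intro i hi
    simp only [Finset.mem_filter, Finset.mem_range] at hi ⊢
    exact ⟨by omega, by omega, by simpa using hi.2⟩
  · intro a ha
    simp only [Finset.mem_filter, Finset.mem_range] at ha
    show a - 1 + 1 = a
    omega
  · intro i _
    show i + 1 - 1 = i
    omega
lemma cntL' {n : ℕ} (w : ℕ → ℕ) :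
    ((Finset.range n).filter (fun a => 1 ≤ a ∧ lpkP w (a-1))).card = lpkNum n w := by
  rw [lpkNum]
  refine Finset.card_bij' (fun a _ => a - 1) (fun i _ => i + 1) ?_ ?_ ?_ ?_
  · intro a ha
    simp only [Finset.mem_filter, Finset.mem_range] at ha ⊢
    exact ⟨by omega, ha.2.2⟩
  · intro i hi
    simp only [Finset.mem_filter, Finset.mem_range] at hi ⊢
    exact ⟨by omega, by omega, by simpa [lpkP] using hi.2⟩
  · intro a ha
    simp only [Finset.mem_filter, Finset.mem_range] at ha
    show a - 1 + 1 = a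
    omega
  · intro i _
    show i + 1 - 1 = i
    omega
lemma cntL {n : ℕ} (w : ℕ → ℕ) :
    ((Finset.range n).filter (fun a => a + 1 < n ∧ lpkP w a)).card = lpkNum n w := by
  rw [lpkNum]
  congr 1
  ext a
  simp only [Finset.mem_filter, Finset.mem_range]
  constructor
  · rintro ⟨h1, h2, h3⟩; exact ⟨by omega, h3⟩
  · rintro ⟨h1, h2⟩; exact ⟨by omega, by omega, h2⟩

lemma count_key {n i j : ℕ} (hi : 1 ≤ i) (hj : 1 ≤ j) (w : ℕ → ℕ) :
    (((Finset.range n).filter (fun a => i + dInd w a = desNum n w + 1 ∧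
        j + (lInd n w a + lInd' w a) = lpkNum n w + 1)).card : ℤ)
    = (if desNum n w = i ∧ lpkNum n w = j then (j:ℤ) else 0)
    + (if desNum n w = i - 1 ∧ lpkNum n w = j then (j:ℤ) else 0)
    + (if desNum n w = i ∧ lpkNum n w = j - 1 then (i:ℤ) - j + 1 else 0)
    + (if desNum n w = i - 1 ∧ lpkNum n w = j - 1 then (n:ℤ) - i - j + 2 else 0) := by
  set i0 := desNum n w with hi0
  set j0 := lpkNum n w with hj0
  have hD := cntD (n := n) w
  have hL := cntL (n := n) w
  have hL' := cntL' (n := n) w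
  have hsub : (Finset.range n).filter (fun a => 1 ≤ a ∧ lpkP w (a-1))
      ⊆ (Finset.range n).filter (fun a => 1 ≤ a ∧ w a < w (a-1)) := by
    intro a ha
    simp only [Finset.mem_filter] at ha ⊢
    exact ⟨ha.1, L'_imp_D ha.2⟩
  have hji : j0 ≤ i0 := by
    have := Finset.card_le_card hsub
    omega
  have hdisj : Disjoint ((Finset.range n).filter (fun a => 1 ≤ a ∧ w a < w (a-1)))
      ((Finset.range n).filter (fun a => a + 1 < n ∧ lpkP w a)) := by
    rw [Finset.disjoint_left]
    intro a ha hb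
    simp only [Finset.mem_filter] at ha hb
    exact L_imp_nD hb.2 ha.2
  have hC : ((Finset.range n).filter
      (fun a => (1 ≤ a ∧ w a < w (a-1)) ∧ ¬ (1 ≤ a ∧ lpkP w (a-1)))).card = i0 - j0 := by
    have e : (Finset.range n).filter
        (fun a => (1 ≤ a ∧ w a < w (a-1)) ∧ ¬ (1 ≤ a ∧ lpkP w (a-1)))
        = ((Finset.range n).filter (fun a => 1 ≤ a ∧ w a < w (a-1)))
          \ ((Finset.range n).filter (fun a => 1 ≤ a ∧ lpkP w (a-1))) := by
      ext x
      simp only [Finset.mem_filter, Finset.mem_sdiff]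
      tauto
    rw [e, Finset.card_sdiff_of_subset hsub, hD, hL']
  have hn' : i0 + j0 ≤ n := by
    have h1 := Finset.card_union_of_disjoint hdisj
    have h2 : ((Finset.range n).filter (fun a => 1 ≤ a ∧ w a < w (a-1))
        ∪ (Finset.range n).filter (fun a => a + 1 < n ∧ lpkP w a)).card ≤ n := by
      calc _ ≤ (Finset.range n).card := Finset.card_le_card (by
            intro x hx
            simp only [Finset.mem_union, Finset.mem_filter] at hx
            rcases hx with h | h <;> exact h.1)
        _ = n := Finset.card_range n
    rw [hi0, hj0, ← hD, ← hL]
    omega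
  have hE : ((Finset.range n).filter
      (fun a => ¬ (1 ≤ a ∧ w a < w (a-1)) ∧ ¬ (a + 1 < n ∧ lpkP w a))).card
      = n - i0 - j0 := by
    have e : (Finset.range n).filter
        (fun a => ¬ (1 ≤ a ∧ w a < w (a-1)) ∧ ¬ (a + 1 < n ∧ lpkP w a))
        = Finset.range n \ (((Finset.range n).filter (fun a => 1 ≤ a ∧ w a < w (a-1)))
          ∪ ((Finset.range n).filter (fun a => a + 1 < n ∧ lpkP w a))) := by
      ext x
      simp only [Finset.mem_filter, Finset.mem_sdiff, Finset.mem_union]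
      tauto
    rw [e, Finset.card_sdiff_of_subset (by
        intro x hx
        simp only [Finset.mem_union, Finset.mem_filter] at hx
        rcases hx with h | h <;> exact h.1),
      Finset.card_union_of_disjoint hdisj, hD, hL, Finset.card_range]
    omega
  by_cases c1 : i0 = i ∧ j0 = j
  · have e : (Finset.range n).filter (fun a => i + dInd w a = i0 + 1 ∧
        j + (lInd n w a + lInd' w a) = j0 + 1)
        = (Finset.range n).filter (fun a => 1 ≤ a ∧ lpkP w (a-1)) := by
      apply Finset.filter_congr
      intro a _
      constructor
      · rintro ⟨c1', c2'⟩
        have hd1 : dInd w a = 1 := by omega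
        have hDp := dInd_one.mp hd1
        have h1 := lInd_le (n := n) (w := w) (a := a)
        have h2 := lInd'_le (w := w) (a := a)
        rcases Nat.eq_zero_or_pos (lInd n w a) with h3 | h3
        · have : lInd' w a = 1 := by omega
          exact lInd'_one.mp this
        · have : lInd n w a = 1 := by omega
          exact absurd hDp (L_imp_nD (lInd_one.mp this))
      · intro hL'p
        have hDp := L'_imp_D hL'p
        have h1 : dInd w a = 1 := dInd_one.mpr hDp
        have h2 : lInd' w a = 1 := lInd'_one.mpr hL'p
        have h3 : lInd n w a = 0 := by
          have h4 := lInd_le (n := n) (w := w) (a := a)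
          rcases Nat.eq_zero_or_pos (lInd n w a) with h5 | h5
          · exact h5
          · have : lInd n w a = 1 := by omega
            exact absurd hL'p (L_imp_nL' (lInd_one.mp this))
        omega
    rw [e, hL']
    rw [if_pos (show i0 = i ∧ j0 = j from c1), if_neg (by omega), if_neg (by omega),
      if_neg (by omega)]
    omega
  · by_cases c2 : i0 = i - 1 ∧ j0 = j
    · have e : (Finset.range n).filter (fun a => i + dInd w a = i0 + 1 ∧
          j + (lInd n w a + lInd' w a) = j0 + 1)
          = (Finset.range n).filter (fun a => a + 1 < n ∧ lpkP w a) := by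
        apply Finset.filter_congr
        intro a _
        have h1 := lInd_le (n := n) (w := w) (a := a)
        have h2 := lInd'_le (w := w) (a := a)
        have h0 := dInd_le (w := w) (a := a)
        constructor
        · rintro ⟨c1', c2'⟩
          have hd0 : dInd w a = 0 := by omega
          have h3 : lInd' w a = 0 := by
            rcases Nat.eq_zero_or_pos (lInd' w a) with h5 | h5
            · exact h5
            · have : lInd' w a = 1 := by omega
              have := dInd_one.mpr (L'_imp_D (lInd'_one.mp this))
              omega
          have : lInd n w a = 1 := by omega
          exact lInd_one.mp this
        · intro hLp
          have h3 : lInd n w a = 1 := lInd_one.mpr hLp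
          have h4 : dInd w a = 0 := by
            rcases Nat.eq_zero_or_pos (dInd w a) with h5 | h5
            · exact h5
            · have : dInd w a = 1 := by omega
              exact absurd (dInd_one.mp this) (L_imp_nD hLp)
          have h5 : lInd' w a = 0 := by
            rcases Nat.eq_zero_or_pos (lInd' w a) with h6 | h6
            · exact h6
            · have : lInd' w a = 1 := by omega
              exact absurd (lInd'_one.mp this) (L_imp_nL' hLp)
          omega
      rw [e, hL]
      rw [if_neg (by omega), if_pos (show i0 = i - 1 ∧ j0 = j from c2), if_neg (by omega),
        if_neg (by omega)]
      omega
    · by_cases c3 : i0 = i ∧ j0 = j - 1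
      · have e : (Finset.range n).filter (fun a => i + dInd w a = i0 + 1 ∧
            j + (lInd n w a + lInd' w a) = j0 + 1)
            = (Finset.range n).filter
              (fun a => (1 ≤ a ∧ w a < w (a-1)) ∧ ¬ (1 ≤ a ∧ lpkP w (a-1))) := by
          apply Finset.filter_congr
          intro a _
          have h1 := lInd_le (n := n) (w := w) (a := a)
          have h2 := lInd'_le (w := w) (a := a)
          have h0 := dInd_le (w := w) (a := a)
          constructor
          · rintro ⟨c1', c2'⟩
            have hd1 : dInd w a = 1 := by omega
            have h3 : lInd' w a = 0 := by omega
            refine ⟨dInd_one.mp hd1, fun hL'p => ?_⟩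
            have := lInd'_one.mpr hL'p
            omega
          · rintro ⟨hDp, hnL'⟩
            have h3 : dInd w a = 1 := dInd_one.mpr hDp
            have h4 : lInd' w a = 0 := by
              rcases Nat.eq_zero_or_pos (lInd' w a) with h6 | h6
              · exact h6
              · have : lInd' w a = 1 := by omega
                exact absurd (lInd'_one.mp this) hnL'
            have h5 : lInd n w a = 0 := by
              rcases Nat.eq_zero_or_pos (lInd n w a) with h6 | h6
              · exact h6
              · have : lInd n w a = 1 := by omega
                exact absurd hDp (L_imp_nD (lInd_one.mp this))
            omega
        rw [e, hC]
        rw [if_neg (by omega), if_neg (by omega),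
          if_pos (show i0 = i ∧ j0 = j - 1 from c3), if_neg (by omega)]
        omega
      · by_cases c4 : i0 = i - 1 ∧ j0 = j - 1
        · have e : (Finset.range n).filter (fun a => i + dInd w a = i0 + 1 ∧
              j + (lInd n w a + lInd' w a) = j0 + 1)
              = (Finset.range n).filter
                (fun a => ¬ (1 ≤ a ∧ w a < w (a-1)) ∧ ¬ (a + 1 < n ∧ lpkP w a)) := by
            apply Finset.filter_congr
            intro a _
            have h1 := lInd_le (n := n) (w := w) (a := a)
            have h2 := lInd'_le (w := w) (a := a)
            have h0 := dInd_le (w := w) (a := a)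
            constructor
            · rintro ⟨c1', c2'⟩
              have hd0 : dInd w a = 0 := by omega
              have h3 : lInd n w a = 0 := by omega
              have h4 : lInd' w a = 0 := by omega
              constructor
              · intro hDp
                have := dInd_one.mpr hDp
                omega
              · intro hLp
                have := lInd_one.mpr hLp
                omega
            · rintro ⟨hnD, hnL⟩
              have h3 : dInd w a = 0 := by
                rcases Nat.eq_zero_or_pos (dInd w a) with h6 | h6
                · exact h6
                · have : dInd w a = 1 := by omega
                  exact absurd (dInd_one.mp this) hnD
              have h4 : lInd n w a = 0 := by
                rcases Nat.eq_zero_or_pos (lInd n w a) with h6 | h6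
                · exact h6
                · have : lInd n w a = 1 := by omega
                  exact absurd (lInd_one.mp this) hnL
              have h5 : lInd' w a = 0 := by
                rcases Nat.eq_zero_or_pos (lInd' w a) with h6 | h6
                · exact h6
                · have h7 : lInd' w a = 1 := by omega
                  have := dInd_one.mpr (L'_imp_D (lInd'_one.mp h7))
                  omega
              omega
          rw [e, hE]
          rw [if_neg (by omega), if_neg (by omega), if_neg (by omega),
            if_pos (show i0 = i - 1 ∧ j0 = j - 1 from c4)]
          omega
        · have e : (Finset.range n).filter (fun a => i + dInd w a = i0 + 1 ∧
              j + (lInd n w a + lInd' w a) = j0 + 1) = ∅ := by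
            rw [Finset.eq_empty_iff_forall_notMem]
            intro a ha
            simp only [Finset.mem_filter] at ha
            obtain ⟨_, c1', c2'⟩ := ha
            have h1 := lInd_le (n := n) (w := w) (a := a)
            have h2 := lInd'_le (w := w) (a := a)
            have h0 := dInd_le (w := w) (a := a)
            have hnand : ¬ (lInd n w a = 1 ∧ lInd' w a = 1) := by
              rintro ⟨hA, hB⟩
              exact absurd (lInd'_one.mp hB) (L_imp_nL' (lInd_one.mp hA))
            omega
          rw [e]
          rw [if_neg (by omega), if_neg (by omega), if_neg (by omega), if_neg (by omega)]
          simp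

-- within-window climbing

lemma upw {r j : ℕ} {w : ℕ → ℕ}
    (h2 : w (r * j) < w (r * j + 2))
    (h3 : ∀ l, 2 ≤ l → l < r → w (r * j + l) < w (r * j + l + 1)) :
    ∀ l, 2 ≤ l → l ≤ r → w (r * j) < w (r * j + l) := by
  intro l
  induction l with
  | zero => omega
  | succ t ih =>
    intro hl2 hlr
    rcases Nat.lt_or_ge t 2 with h | h
    · have : t + 1 = 2 := by omega
      rw [this]; exact h2
    · have h4 := h3 t h (by omega)
      have h5 := ih (by omega) (by omega)
      show w (r * j) < w (r * j + t + 1)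
      omega

lemma upw2 {r j : ℕ} {w : ℕ → ℕ}
    (h3 : ∀ l, 2 ≤ l → l < r → w (r * j + l) < w (r * j + l + 1)) :
    ∀ l l', 2 ≤ l → l ≤ l' → l' ≤ r → w (r * j + l) + (l' - l) ≤ w (r * j + l') := by
  intro l l' hl2 hll' hl'r
  induction l' with
  | zero => omega
  | succ t ih =>
    rcases Nat.lt_or_ge t l with h | h
    · have : l = t + 1 := by omega
      subst this
      simp
    · have h4 := h3 t (by omega) (by omega)
      have h5 := ih (by omega) (by omega)
      show w (r * j + l) + (t + 1 - l) ≤ w (r * j + t + 1)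
      omega

/-- All positions before `r*j` carry smaller values than position `r*j`. -/
lemma chainA {r k : ℕ} (hr : 2 ≤ r) {w : ℕ → ℕ} (hc : IsCluster r k w) :
    ∀ j ≤ k, ∀ p < r * j, w p < w (r * j) := by
  intro j
  induction j with
  | zero => omega
  | succ t ih =>
    intro hjk p hp
    have htk : t < k := by omega
    obtain ⟨w1, w2, w3⟩ := hc t htk
    have hmul : r * (t + 1) = r * t + r := by ring
    have htop : w (r * t) < w (r * (t + 1)) := by
      rw [hmul]; exact upw w2 w3 r (by omega) (by omega)
    rcases Nat.lt_or_ge p (r * t) with h | h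
    · exact lt_trans (ih (by omega) p h) htop
    · -- r*t ≤ p < r*(t+1)
      have hpl : p = r * t + (p - r * t) := by omega
      set l := p - r * t with hl
      have hlr : l < r := by omega
      rcases Nat.lt_or_ge l 2 with h2 | h2
      · rcases Nat.eq_zero_or_pos l with h0 | h0
        · have : p = r * t := by omega
          rw [this]; exact htop
        · have : p = r * t + 1 := by omega
          rw [this]
          exact lt_trans w1 htop
      · have hstep : w (r * t + l) < w (r * t + l + 1) := w3 l h2 hlr
        have hclimb := upw2 w3 (l + 1) r (by omega) (by omega) (by omega)
        have e1 : w (r * t + (l + 1)) = w (r * t + l + 1) := rfl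
        rw [e1] at hclimb
        have e3 : w p = w (r * t + l) := by rw [← hpl]
        have e2 : w (r * (t + 1)) = w (r * t + r) := by rw [hmul]
        rw [e3, e2]
        omega

/-- Strict dominance extended into the final window. -/
lemma window_lt {r k : ℕ} (hr : 2 ≤ r) {w : ℕ → ℕ} (hc : IsCluster r (k + 1) w) :
    ∀ l, 2 ≤ l → l ≤ r → ∀ p < r * k + l, w p < w (r * k + l) := by
  intro l hl2 hlr p hp
  obtain ⟨w1, w2, w3⟩ := hc k (by omega)
  have hA := chainA hr hc k (by omega)
  have hup := upw w2 w3 l hl2 hlr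
  rcases Nat.lt_or_ge p (r * k) with h | h
  · exact lt_trans (hA p h) hup
  · rcases Nat.eq_or_lt_of_le h with h0 | h0
    · rw [← h0]; exact hup
    · rcases Nat.lt_or_ge p (r * k + 2) with h1 | h1
      · have : p = r * k + 1 := by omega
        rw [this]
        exact lt_trans w1 hup
      · set l' := p - r * k with hl'
        have he : p = r * k + l' := by omega
        have hstep : w (r * k + l') < w (r * k + l' + 1) := w3 l' (by omega) (by omega)
        have hclimb := upw2 w3 (l' + 1) l (by omega) (by omega) (by omega)
        have e1 : w (r * k + (l' + 1)) = w (r * k + l' + 1) := rfl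
        rw [e1] at hclimb
        rw [he]
        omega

/-- Pigeonhole: if a position dominates all earlier ones, its value is at least its index. -/
lemma word_ge {n : ℕ} (π : Equiv.Perm (Fin n)) {q : ℕ} (hq : q < n)
    (h : ∀ p < q, ofPerm π p < ofPerm π q) : q ≤ ofPerm π q := by
  by_contra hcon
  push_neg at hcon
  -- image of range (q+1) has q+1 distinct elements all ≤ ofPerm π q < q
  have hsub : (Finset.range (q+1)).image (ofPerm π) ⊆ Finset.range (ofPerm π q + 1) := by
    intro x hx
    simp only [Finset.mem_image, Finset.mem_range] at hx ⊢
    obtain ⟨p, hp, rfl⟩ := hx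
    rcases Nat.lt_or_ge p q with h1 | h1
    · exact lt_trans (h p h1) (by omega)
    · have : p = q := by omega
      rw [this]; omega
  have hinj : Set.InjOn (ofPerm π) (Finset.range (q+1)) := by
    intro x hx y hy hxy
    simp only [Finset.coe_range, Set.mem_Iio] at hx hy
    exact ofPerm_inj π (by omega) (by omega) hxy
  have h1 : ((Finset.range (q+1)).image (ofPerm π)).card = q + 1 := by
    rw [Finset.card_image_of_injOn hinj, Finset.card_range]
  have h2 := Finset.card_le_card hsub
  rw [h1, Finset.card_range] at h2
  omega

/-- The maximum value sits at the last position of a cluster word. -/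
lemma cluster_max {r k : ℕ} (hr : 2 ≤ r) (π : Equiv.Perm (Fin (r*k+1)))
    (hc : IsCluster r k (ofPerm π⁻¹)) : ofPerm π⁻¹ (r*k) = r*k := by
  have h := chainA hr hc k (le_refl k)
  have h1 := word_ge π⁻¹ (show r*k < r*k+1 by omega) h
  have h2 := ofPerm_lt π⁻¹ (show r*k < r*k+1 by omega)
  omega

/-- value-shift map -/
def liftA (a : ℕ) : ℕ → ℕ := fun v => if v < a then v else v + 1

lemma liftA_lt {a x y : ℕ} : liftA a x < liftA a y ↔ x < y := by
  unfold liftA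
  split <;> split <;> omega

lemma extv_lift {n a p : ℕ} {s : ℕ → ℕ} (hp : p < n) :
    extv n s a p = liftA a (s p) := by
  unfold extv liftA
  rw [if_pos hp]

lemma extPerm_mem {r k : ℕ} (hr : 2 ≤ r) (π : Equiv.Perm (Fin (r*k+1)))
    (hπ : IsCluster r k (ofPerm π⁻¹)) {a : ℕ} (ha : a < r*k+1)
    (hm : r*k+1 < r*(k+1)+1) :
    IsCluster r (k+1) (ofPerm (extPerm hm π a ha)⁻¹) := by
  have hmul : r*(k+1) = r*k + r := by ring
  have key : ∀ p < r*(k+1)+1, ofPerm (extPerm hm π a ha)⁻¹ p = extv (r*k+1) (ofPerm π⁻¹) a p :=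
    ofPerm_extPerm_inv hm π a ha
  have hev : ∀ p < r*k+1, ofPerm (extPerm hm π a ha)⁻¹ p = liftA a (ofPerm π⁻¹ p) := by
    intro p hp
    rw [key p (by omega), extv_lift hp]
  intro j hj
  rcases Nat.lt_or_ge j k with hjk | hjk
  · have hb : r*j + r ≤ r*k := by
      have h1 : r*(j+1) ≤ r*k := Nat.mul_le_mul_left r (by omega)
      have h2 : r*(j+1) = r*j + r := by ring
      omega
    obtain ⟨w1, w2, w3⟩ := hπ j hjk
    refine ⟨?_, ?_, ?_⟩
    · rw [hev (r*j+1) (by omega), hev (r*j) (by omega)]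
      exact liftA_lt.mpr w1
    · rw [hev (r*j) (by omega), hev (r*j+2) (by omega)]
      exact liftA_lt.mpr w2
    · intro l hl2 hlr
      rw [hev (r*j+l) (by omega), hev (r*j+l+1) (by omega)]
      exact liftA_lt.mpr (w3 l hl2 hlr)
  · have hjeq : j = k := by omega
    rw [hjeq]
    have hmax : ofPerm π⁻¹ (r*k) = r*k := cluster_max hr π hπ
    have h0 : ofPerm (extPerm hm π a ha)⁻¹ (r*k) = r*k + 1 := by
      rw [hev (r*k) (by omega), hmax]
      unfold liftA
      rw [if_neg (by omega)]
    have h1 : ofPerm (extPerm hm π a ha)⁻¹ (r*k+1) = a := by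
      rw [key (r*k+1) (by omega)]
      exact extv_n
    have h2 : ofPerm (extPerm hm π a ha)⁻¹ (r*k+2) = r*k+2 := by
      rw [key (r*k+2) (by omega)]
      exact extv_top (by omega)
    refine ⟨?_, ?_, ?_⟩
    · rw [h0, h1]; omega
    · rw [h0, h2]; omega
    · intro l hl2 hlr
      have h3 : ofPerm (extPerm hm π a ha)⁻¹ (r*k+l) = r*k+l := by
        rw [key (r*k+l) (by omega)]
        exact extv_top (by omega)
      have h4 : ofPerm (extPerm hm π a ha)⁻¹ (r*k+l+1) = r*k+l+1 := by
        rw [key (r*k+l+1) (by omega)]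
        exact extv_top (by omega)
      rw [h3, h4]; omega

lemma extPerm_injective {n m : ℕ} (hm : n < m) (π π' : Equiv.Perm (Fin n)) {a a' : ℕ}
    (ha : a < n) (ha' : a' < n) (h : extPerm hm π a ha = extPerm hm π' a' ha') :
    π = π' ∧ a = a' := by
  have hv : ∀ p, p < m → extv n (ofPerm π⁻¹) a p = extv n (ofPerm π'⁻¹) a' p := by
    intro p hp
    rw [← ofPerm_extPerm_inv hm π a ha p hp, ← ofPerm_extPerm_inv hm π' a' ha' p hp, h]
  have haa : a = a' := by
    have h1 := hv n hm
    rwa [extv_n, extv_n] at h1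
  subst haa
  refine ⟨?_, rfl⟩
  have hss : ∀ p, p < n → ofPerm π⁻¹ p = ofPerm π'⁻¹ p := by
    intro p hp
    have h1 := hv p (by omega)
    rw [extv_lift hp, extv_lift hp] at h1
    unfold liftA at h1
    split at h1 <;> split at h1 <;> omega
  have hinv : π⁻¹ = π'⁻¹ := by
    apply Equiv.ext
    intro v
    apply Fin.ext
    have h1 := hss v.val v.isLt
    simpa [ofPerm, v.isLt] using h1
  exact inv_injective hinv

lemma ext_surj {r k : ℕ} (hr : 2 ≤ r) (hm : r*k+1 < r*(k+1)+1)
    (π' : Equiv.Perm (Fin (r*(k+1)+1)))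
    (hc : IsCluster r (k+1) (ofPerm π'⁻¹)) :
    ∃ (π : Equiv.Perm (Fin (r*k+1))) (a : ℕ) (ha : a < r*k+1),
      IsCluster r k (ofPerm π⁻¹) ∧ extPerm hm π a ha = π' := by
  have hmul : r*(k+1) = r*k + r := by ring
  have hrest : IsCluster r k (ofPerm π'⁻¹) := fun j hj => hc j (by omega)
  have f1 : ∀ p < r*k, ofPerm π'⁻¹ p < ofPerm π'⁻¹ (r*k) :=
    chainA hr hrest k (le_refl k)
  obtain ⟨w1, w2, w3⟩ := hc k (by omega)
  -- the trailing positions are fixed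
  have ftop : ∀ l, 2 ≤ l → l ≤ r → ofPerm π'⁻¹ (r*k + l) = r*k + l := by
    intro l hl2 hlr
    have hge : r*k + l ≤ ofPerm π'⁻¹ (r*k + l) :=
      word_ge π'⁻¹ (by omega) (window_lt hr hc l hl2 hlr)
    have hclimb := upw2 w3 l r hl2 hlr (le_refl r)
    have hb : ofPerm π'⁻¹ (r*k + r) < r*(k+1)+1 := ofPerm_lt π'⁻¹ (by omega)
    omega
  -- the inserted value
  set a := ofPerm π'⁻¹ (r*k+1) with haDef
  have ha : a < r*k+1 := by
    have h2 : ofPerm π'⁻¹ (r*k+2) = r*k+2 := ftop 2 (le_refl 2) hr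
    omega
  -- positions of small values
  have f9 : ∀ u, u ≤ r*k+1 → u ≠ a → ofPerm π' u < r*k+1 := by
    intro u hu hne
    have hum : u < r*(k+1)+1 := by omega
    have hpm : ofPerm π' u < r*(k+1)+1 := ofPerm_lt π' hum
    have hinv : ofPerm π'⁻¹ (ofPerm π' u) = u := ofPerm_inv_ofPerm π' hum
    by_contra hcon
    push_neg at hcon
    rcases Nat.eq_or_lt_of_le hcon with h | h
    · rw [← h] at hinv
      rw [← haDef] at hinv
      omega
    · set p := ofPerm π' u with hp
      have he : p = r*k + (p - r*k) := by omega
      have hft := ftop (p - r*k) (by omega) (by omega)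
      rw [← he] at hft
      omega
  have hliftb : ∀ v : Fin (r*k+1), liftA a v.val ≤ r*k+1 ∧ liftA a v.val ≠ a := by
    intro v
    have := v.isLt
    unfold liftA
    split <;> omega
  -- the restricted permutation
  have hτinj : Function.Injective (fun v : Fin (r*k+1) =>
      (⟨ofPerm π' (liftA a v.val), f9 _ (hliftb v).1 (hliftb v).2⟩ : Fin (r*k+1))) := by
    intro x y hxy
    have h1 : ofPerm π' (liftA a x.val) = ofPerm π' (liftA a y.val) :=
      congrArg Fin.val hxy
    have h2 : liftA a x.val = liftA a y.val :=
      ofPerm_inj π' (by have := (hliftb x).1; omega) (by have := (hliftb y).1; omega) h1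
    apply Fin.ext
    unfold liftA at h2
    split at h2 <;> split at h2 <;> omega
  set π : Equiv.Perm (Fin (r*k+1)) :=
    Equiv.ofBijective _ (Finite.injective_iff_bijective.mp hτinj) with hπDef
  have hπapp : ∀ v, (hv : v < r*k+1) → ofPerm π v = ofPerm π' (liftA a v) := by
    intro v hv
    simp only [ofPerm, dif_pos hv, hπDef, Equiv.ofBijective_apply]
  have hext : extPerm hm π a ha = π' := by
    apply Equiv.ext
    intro v
    apply Fin.ext
    have hv : v.val < r*(k+1)+1 := v.isLt
    have hR : (π' v).val = ofPerm π' v.val := by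
      simp [ofPerm, hv]
    have hL : ((extPerm hm π a ha) v).val = extw (r*k+1) (ofPerm π) a v.val := rfl
    rw [hL, hR]
    rcases lt_trichotomy v.val a with h | h | h
    · rw [extw_low h, hπapp v.val (by omega)]
      unfold liftA
      rw [if_pos h]
    · rw [h, extw_a]
      have := ofPerm_ofPerm_inv π' (show r*k+1 < r*(k+1)+1 by omega)
      rw [← haDef] at this
      omega
    · rcases le_or_gt v.val (r*k+1) with h2 | h2
      · rw [extw_mid h h2, hπapp (v.val - 1) (by omega)]
        have he : liftA a (v.val - 1) = v.val := by
          unfold liftA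
          rw [if_neg (by omega)]
          omega
        rw [he]
      · rw [extw_top (by omega) h2]
        have hft := ftop (v.val - r*k) (by omega) (by omega)
        have he : r*k + (v.val - r*k) = v.val := by omega
        rw [he] at hft
        have := ofPerm_ofPerm_inv π' hv
        rw [hft] at this
        omega
  have hsrel : ∀ p, (hp : p < r*k+1) →
      ofPerm π'⁻¹ p = liftA a (ofPerm π⁻¹ p) := by
    intro p hp
    have h1 := ofPerm_extPerm_inv hm π a ha p (by omega)
    rw [hext] at h1
    rw [extv_lift hp] at h1
    exact h1
  refine ⟨π, a, ha, ?_, hext⟩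
  intro j hj
  have hb : r*j + r ≤ r*k := by
    have h1 : r*(j+1) ≤ r*k := Nat.mul_le_mul_left r (by omega)
    have h2 : r*(j+1) = r*j + r := by ring
    omega
  obtain ⟨u1, u2, u3⟩ := hrest j hj
  rw [hsrel (r*j+1) (by omega), hsrel (r*j) (by omega)] at u1
  rw [hsrel (r*j) (by omega), hsrel (r*j+2) (by omega)] at u2
  refine ⟨liftA_lt.mp u1, liftA_lt.mp u2, ?_⟩
  intro l hl2 hlr
  have u4 := u3 l hl2 hlr
  rw [hsrel (r*j+l) (by omega), hsrel (r*j+l+1) (by omega)] at u4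
  exact liftA_lt.mp u4


/-- the recurrence for `p̃_{r,k}(i,j)`. -/
theorem stmt8 (r k : ℕ) (hr : 2 ≤ r) (hk : 1 ≤ k) (i j : ℕ) (hi : 1 ≤ i) (hj : 1 ≤ j) :
    (ptnum r (k + 1) i j : ℤ) =
      (j : ℤ) * ptnum r k i j + ((i : ℤ) - j + 1) * ptnum r k i (j - 1)
        + (j : ℤ) * ptnum r k (i - 1) j
        + ((r : ℤ) * k - i - j + 3) * ptnum r k (i - 1) (j - 1) := by
  have hmul : r*(k+1) = r*k + r := by ring
  have hm : r*k+1 < r*(k+1)+1 := by omega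
  have hm2 : (r*k+1) + 2 ≤ r*(k+1)+1 := by omega
  set S := (clusterSet r k).sigma (fun π => (Finset.range (r*k+1)).filter
    (fun a => i + dInd (ofPerm π) a = desNum (r*k+1) (ofPerm π) + 1 ∧
      j + (lInd (r*k+1) (ofPerm π) a + lInd' (ofPerm π) a) = lpkNum (r*k+1) (ofPerm π) + 1))
    with hS
  have hmem : ∀ x ∈ S, x.2 < r*k+1 ∧ IsCluster r k (ofPerm x.1⁻¹) ∧
      i + dInd (ofPerm x.1) x.2 = desNum (r*k+1) (ofPerm x.1) + 1 ∧
      j + (lInd (r*k+1) (ofPerm x.1) x.2 + lInd' (ofPerm x.1) x.2)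
        = lpkNum (r*k+1) (ofPerm x.1) + 1 := by
    intro x hx
    rw [hS, Finset.mem_sigma] at hx
    obtain ⟨hx1, hx2⟩ := hx
    rw [clusterSet, Finset.mem_filter] at hx1
    rw [Finset.mem_filter, Finset.mem_range] at hx2
    exact ⟨hx2.1, hx1.2, hx2.2.1, hx2.2.2⟩
  have main : S.card = ((clusterSet r (k+1)).filter (fun π' =>
      desNum (r*(k+1)+1) (ofPerm π') = i ∧ lpkNum (r*(k+1)+1) (ofPerm π') = j)).card := by
    refine Finset.card_bij (fun x hx => extPerm hm x.1 x.2 (hmem x hx).1) ?_ ?_ ?_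
    · intro x hx
      obtain ⟨hax, hclx, hd, hl⟩ := hmem x hx
      rw [Finset.mem_filter]
      constructor
      · rw [clusterSet, Finset.mem_filter]
        exact ⟨Finset.mem_univ _, extPerm_mem hr x.1 hclx hax hm⟩
      · have hw : ∀ v < r*k+1, ofPerm x.1 v < r*k+1 := fun v hv => ofPerm_lt x.1 hv
        have hcongd : desNum (r*(k+1)+1) (ofPerm (extPerm hm x.1 x.2 (hmem x hx).1))
            = desNum (r*(k+1)+1) (extw (r*k+1) (ofPerm x.1) x.2) :=
          desNum_congr _ (fun v hv => ofPerm_extPerm hm x.1 x.2 (hmem x hx).1 v hv)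
        have hcongl : lpkNum (r*(k+1)+1) (ofPerm (extPerm hm x.1 x.2 (hmem x hx).1))
            = lpkNum (r*(k+1)+1) (extw (r*k+1) (ofPerm x.1) x.2) :=
          lpkNum_congr _ (fun v hv => ofPerm_extPerm hm x.1 x.2 (hmem x hx).1 v hv)
        have hde := des_ext (ofPerm x.1) hw hax hm2
        have hle := lpk_ext (ofPerm x.1) hw hax hm2
        constructor
        · omega
        · omega
    · intro x hx y hy hxy
      obtain ⟨e1, e2⟩ := extPerm_injective hm x.1 y.1 (hmem x hx).1 (hmem y hy).1 hxy
      exact Sigma.ext e1 (heq_of_eq e2)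
    · intro π' hπ'
      rw [Finset.mem_filter] at hπ'
      obtain ⟨hπ'c, hπ'd, hπ'l⟩ := hπ'
      rw [clusterSet, Finset.mem_filter] at hπ'c
      obtain ⟨π, a, ha, hclus, hext⟩ := ext_surj hr hm π' hπ'c.2
      have hw : ∀ v < r*k+1, ofPerm π v < r*k+1 := fun v hv => ofPerm_lt π hv
      have hcongd : desNum (r*(k+1)+1) (ofPerm (extPerm hm π a ha))
          = desNum (r*(k+1)+1) (extw (r*k+1) (ofPerm π) a) :=
        desNum_congr _ (fun v hv => ofPerm_extPerm hm π a ha v hv)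
      have hcongl : lpkNum (r*(k+1)+1) (ofPerm (extPerm hm π a ha))
          = lpkNum (r*(k+1)+1) (extw (r*k+1) (ofPerm π) a) :=
        lpkNum_congr _ (fun v hv => ofPerm_extPerm hm π a ha v hv)
      have hde := des_ext (ofPerm π) hw ha hm2
      have hle := lpk_ext (ofPerm π) hw ha hm2
      rw [← hext] at hπ'd hπ'l
      have hxmem : (⟨π, a⟩ : (_ : Equiv.Perm (Fin (r*k+1))) × ℕ) ∈ S := by
        rw [hS, Finset.mem_sigma]
        dsimp only
        constructor
        · rw [clusterSet, Finset.mem_filter]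
          exact ⟨Finset.mem_univ _, hclus⟩
        · rw [Finset.mem_filter, Finset.mem_range]
          refine ⟨ha, by omega, by omega⟩
      exact ⟨⟨π, a⟩, hxmem, hext⟩
  -- now sum over the sigma set
  have hsig : (S.card : ℤ) = ∑ π ∈ clusterSet r k,
      (((Finset.range (r*k+1)).filter
        (fun a => i + dInd (ofPerm π) a = desNum (r*k+1) (ofPerm π) + 1 ∧
          j + (lInd (r*k+1) (ofPerm π) a + lInd' (ofPerm π) a)
            = lpkNum (r*k+1) (ofPerm π) + 1)).card : ℤ) := by
    rw [hS, Finset.card_sigma]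
    push_cast
    rfl
  have hpt : (ptnum r (k+1) i j : ℤ) = (S.card : ℤ) := by
    rw [ptnum, main]
  rw [hpt, hsig]
  have hkey : ∀ π ∈ clusterSet r k,
      (((Finset.range (r*k+1)).filter
        (fun a => i + dInd (ofPerm π) a = desNum (r*k+1) (ofPerm π) + 1 ∧
          j + (lInd (r*k+1) (ofPerm π) a + lInd' (ofPerm π) a)
            = lpkNum (r*k+1) (ofPerm π) + 1)).card : ℤ)
      = (if desNum (r*k+1) (ofPerm π) = i ∧ lpkNum (r*k+1) (ofPerm π) = j then (j:ℤ) else 0)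
      + (if desNum (r*k+1) (ofPerm π) = i - 1 ∧ lpkNum (r*k+1) (ofPerm π) = j then (j:ℤ) else 0)
      + (if desNum (r*k+1) (ofPerm π) = i ∧ lpkNum (r*k+1) (ofPerm π) = j - 1
          then (i:ℤ) - j + 1 else 0)
      + (if desNum (r*k+1) (ofPerm π) = i - 1 ∧ lpkNum (r*k+1) (ofPerm π) = j - 1
          then ((r*k+1 : ℕ):ℤ) - i - j + 2 else 0) :=
    fun π _ => count_key hi hj (ofPerm π)
  rw [Finset.sum_congr rfl hkey]
  rw [Finset.sum_add_distrib, Finset.sum_add_distrib, Finset.sum_add_distrib]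
  have c1 : ∑ π ∈ clusterSet r k,
      (if desNum (r*k+1) (ofPerm π) = i ∧ lpkNum (r*k+1) (ofPerm π) = j then (j:ℤ) else 0)
      = (ptnum r k i j : ℤ) * j := by
    rw [← Finset.sum_filter, Finset.sum_const, nsmul_eq_mul, ptnum]
  have c2 : ∑ π ∈ clusterSet r k,
      (if desNum (r*k+1) (ofPerm π) = i - 1 ∧ lpkNum (r*k+1) (ofPerm π) = j then (j:ℤ) else 0)
      = (ptnum r k (i-1) j : ℤ) * j := by
    rw [← Finset.sum_filter, Finset.sum_const, nsmul_eq_mul, ptnum]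
  have c3 : ∑ π ∈ clusterSet r k,
      (if desNum (r*k+1) (ofPerm π) = i ∧ lpkNum (r*k+1) (ofPerm π) = j - 1
        then (i:ℤ) - j + 1 else 0)
      = (ptnum r k i (j-1) : ℤ) * ((i:ℤ) - j + 1) := by
    rw [← Finset.sum_filter, Finset.sum_const, nsmul_eq_mul, ptnum]
  have c4 : ∑ π ∈ clusterSet r k,
      (if desNum (r*k+1) (ofPerm π) = i - 1 ∧ lpkNum (r*k+1) (ofPerm π) = j - 1
        then ((r*k+1 : ℕ):ℤ) - i - j + 2 else 0)
      = (ptnum r k (i-1) (j-1) : ℤ) * (((r*k+1:ℕ):ℤ) - i - j + 2) := by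
    rw [← Finset.sum_filter, Finset.sum_const, nsmul_eq_mul, ptnum]
  rw [c1, c2, c3, c4]
  push_cast
  ring
end
end
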